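/- Suppose u ∈ C⁴(Ω̄) satisfies u = 0 and ∇u·𝐧 = 0 on ∂Ω, set f = ε²Δ²u − Δu, and suppose u_N = (u₀, u_b, 𝐮_g) ∈ V_N⁰ satisfies a(u_N, v) = (f, v₀)_Ω for all v ∈ V_N⁰. Set e_N = Q_N u − u_N. Then for every v = (v₀, v_b, 𝐯_g) ∈ V_N⁰: a(e_N, v) = l₁(u,v) − l₂(u,v) + l₃(u,v) + s(Q_N u, v), where l₁(u,v) = Σ_{T∈𝒯_N} ε² ⟨Δu − Q₀Δu, (∇v₀ − 𝐯_g)·𝐧⟩_{∂T}, l₂(u,v) = Σ_{T∈𝒯_N} ε² ⟨∇(Δu − Q₀Δu)·𝐧, v₀ − v_b⟩_{∂T}, l₃(u,v) = Σ_{T∈𝒯_N} ⟨(∇u − 𝐐_N∇u)·𝐧, v₀ − v_b⟩_{∂T}, and 𝐐_N is the componentwise elementwise L²(T)-orthogonal projection onto Q_k(T)². -/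

import Mathlib

open MeasureTheory Real

noncomputable section

/-- `Q_k`: real polynomials in two variables of degree at most `k` in each variable. -/
def IsQk (k : ℕ) (v : ℝ → ℝ → ℝ) : Prop :=
  ∃ p : MvPolynomial (Fin 2) ℝ, (∀ i, p.degreeOf i ≤ k) ∧
    ∀ x y : ℝ, v x y = MvPolynomial.eval ![x, y] p

/-- `P_k`: real polynomials in one variable of degree at most `k`. -/
def IsPk (k : ℕ) (f : ℝ → ℝ) : Prop :=
  ∃ p : Polynomial ℝ, p.natDegree ≤ k ∧ ∀ x : ℝ, f x = p.eval x

/-- Partial derivative in the first variable. -/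
def pd1 (w : ℝ → ℝ → ℝ) : ℝ → ℝ → ℝ := fun x y => deriv (fun t => w t y) x

/-- Partial derivative in the second variable. -/
def pd2 (w : ℝ → ℝ → ℝ) : ℝ → ℝ → ℝ := fun x y => deriv (fun t => w x t) y

/-- Laplacian. -/
def lapl (w : ℝ → ℝ → ℝ) : ℝ → ℝ → ℝ :=
  fun x y => pd1 (pd1 w) x y + pd2 (pd2 w) x y

/-- L² inner product over the rectangle `[x0,x1] × [y0,y1]`. -/
def ipT (x0 x1 y0 y1 : ℝ) (f g : ℝ → ℝ → ℝ) : ℝ :=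
  ∫ x in x0..x1, ∫ y in y0..y1, f x y * g x y

/-- Squared L² norm over the rectangle `[x0,x1] × [y0,y1]`. -/
def normSqT (x0 x1 y0 y1 : ℝ) (w : ℝ → ℝ → ℝ) : ℝ := ipT x0 x1 y0 y1 w w

/-- Squared L² norm over the two edges parallel to the x-axis (`∂T₁`). -/
def normSqE1 (x0 x1 y0 y1 : ℝ) (w : ℝ → ℝ → ℝ) : ℝ :=
  ∫ x in x0..x1, ((w x y0) ^ 2 + (w x y1) ^ 2)

/-- Squared L² norm over the two edges parallel to the y-axis (`∂T₂`). -/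
def normSqE2 (x0 x1 y0 y1 : ℝ) (w : ℝ → ℝ → ℝ) : ℝ :=
  ∫ y in y0..y1, ((w x0 y) ^ 2 + (w x1 y) ^ 2)

/-- `P` is the L²(T)-orthogonal projection of `φ` onto `Q_k(T)`. -/
def IsProjT (k : ℕ) (x0 x1 y0 y1 : ℝ) (φ P : ℝ → ℝ → ℝ) : Prop :=
  IsQk k P ∧ ∀ q : ℝ → ℝ → ℝ, IsQk k q →
    ipT x0 x1 y0 y1 (fun x y => φ x y - P x y) q = 0

/-- `g` is the L²(e)-orthogonal projection of `f` onto `P_k(e)`, for an edge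
parametrized by `[a,b]`. -/
def IsProjE (k : ℕ) (a b : ℝ) (f g : ℝ → ℝ) : Prop :=
  IsPk k g ∧ ∀ q : ℝ → ℝ, IsPk k q → (∫ x in a..b, (f x - g x) * q x) = 0

/-- Mixed partial derivative `∂₁^i ∂₂^j`. -/
def pdM (i j : ℕ) (w : ℝ → ℝ → ℝ) : ℝ → ℝ → ℝ := pd1^[i] (pd2^[j] w)

/-- The 1D Shishkin mesh points on `[0,1]` with transition parameter `lam`:
`[0,lam]` is divided into `N/4` equal subintervals, `[lam, 1-lam]` into `N/2`,
and `[1-lam, 1]` into `N/4`. -/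
def meshPt (N : ℕ) (lam : ℝ) (i : ℕ) : ℝ :=
  if i ≤ N / 4 then (i : ℝ) * (4 * lam / N)
  else if i ≤ 3 * (N / 4) then lam + ((i : ℝ) - (↑(N / 4) : ℝ)) * (2 * (1 - 2 * lam) / N)
  else 1 - lam + ((i : ℝ) - (↑(3 * (N / 4)) : ℝ)) * (4 * lam / N)

/-- The Shishkin transition parameter `λ = α ε ln N` with `α = k + 1`. -/
def shLam (k N : ℕ) (ε : ℝ) : ℝ := ((k : ℝ) + 1) * ε * Real.log N

/-- The Shishkin mesh points for the parameters `k`, `N`, `ε`. -/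
def shPt (k N : ℕ) (ε : ℝ) (i : ℕ) : ℝ := meshPt N (shLam k N ε) i

/-- The fine mesh width `h = 4λ/N`. -/
def shH (k N : ℕ) (ε : ℝ) : ℝ := 4 * shLam k N ε / N

/-- The coarse mesh width `H = 2(1-2λ)/N`. -/
def shHc (k N : ℕ) (ε : ℝ) : ℝ := 2 * (1 - 2 * shLam k N ε) / N

/-- `w` is `C^{k+1}` (as a function of two variables). -/
def SmoothC (k : ℕ) (w : ℝ → ℝ → ℝ) : Prop :=
  ContDiff ℝ (k + 1) (fun p : ℝ × ℝ => w p.1 p.2)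

/-- The layer decomposition `u = S + E₁ + E₂ + E₃ + E₄ + E₁₂ + E₂₃ + E₃₄ + E₄₁`
on `Ω̄ = [0,1]²`, together with the derivative bounds of Assumption 2.1. -/
structure ShishkinDecomp (k : ℕ) (C₀ ε : ℝ)
    (u S E1 E2 E3 E4 E12 E23 E34 E41 : ℝ → ℝ → ℝ) : Prop where
  smooth_u : SmoothC k u
  smooth_S : SmoothC k S
  smooth_E1 : SmoothC k E1
  smooth_E2 : SmoothC k E2
  smooth_E3 : SmoothC k E3
  smooth_E4 : SmoothC k E4
  smooth_E12 : SmoothC k E12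
  smooth_E23 : SmoothC k E23
  smooth_E34 : SmoothC k E34
  smooth_E41 : SmoothC k E41
  sum_eq : ∀ x ∈ Set.Icc (0:ℝ) 1, ∀ y ∈ Set.Icc (0:ℝ) 1,
    u x y = S x y + E1 x y + E2 x y + E3 x y + E4 x y
      + E12 x y + E23 x y + E34 x y + E41 x y
  bound_S : ∀ i j : ℕ, i + j ≤ k + 1 → ∀ x ∈ Set.Icc (0:ℝ) 1, ∀ y ∈ Set.Icc (0:ℝ) 1,
    |pdM i j S x y| ≤ C₀
  bound_E1 : ∀ i j : ℕ, i + j ≤ k + 1 → ∀ x ∈ Set.Icc (0:ℝ) 1, ∀ y ∈ Set.Icc (0:ℝ) 1,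
    |pdM i j E1 x y| ≤ C₀ * ε ^ ((1 : ℝ) - j) * Real.exp (-y / ε)
  bound_E2 : ∀ i j : ℕ, i + j ≤ k + 1 → ∀ x ∈ Set.Icc (0:ℝ) 1, ∀ y ∈ Set.Icc (0:ℝ) 1,
    |pdM i j E2 x y| ≤ C₀ * ε ^ ((1 : ℝ) - i) * Real.exp (-(1 - x) / ε)
  bound_E3 : ∀ i j : ℕ, i + j ≤ k + 1 → ∀ x ∈ Set.Icc (0:ℝ) 1, ∀ y ∈ Set.Icc (0:ℝ) 1,
    |pdM i j E3 x y| ≤ C₀ * ε ^ ((1 : ℝ) - j) * Real.exp (-(1 - y) / ε)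
  bound_E4 : ∀ i j : ℕ, i + j ≤ k + 1 → ∀ x ∈ Set.Icc (0:ℝ) 1, ∀ y ∈ Set.Icc (0:ℝ) 1,
    |pdM i j E4 x y| ≤ C₀ * ε ^ ((1 : ℝ) - i) * Real.exp (-x / ε)
  bound_E12 : ∀ i j : ℕ, i + j ≤ k + 1 → ∀ x ∈ Set.Icc (0:ℝ) 1, ∀ y ∈ Set.Icc (0:ℝ) 1,
    |pdM i j E12 x y| ≤ C₀ * ε ^ ((1 : ℝ) - i - j) * Real.exp (-(1 - x) / ε) * Real.exp (-y / ε)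
  bound_E23 : ∀ i j : ℕ, i + j ≤ k + 1 → ∀ x ∈ Set.Icc (0:ℝ) 1, ∀ y ∈ Set.Icc (0:ℝ) 1,
    |pdM i j E23 x y| ≤ C₀ * ε ^ ((1 : ℝ) - i - j) * Real.exp (-(1 - x) / ε) * Real.exp (-(1 - y) / ε)
  bound_E34 : ∀ i j : ℕ, i + j ≤ k + 1 → ∀ x ∈ Set.Icc (0:ℝ) 1, ∀ y ∈ Set.Icc (0:ℝ) 1,
    |pdM i j E34 x y| ≤ C₀ * ε ^ ((1 : ℝ) - i - j) * Real.exp (-x / ε) * Real.exp (-(1 - y) / ε)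
  bound_E41 : ∀ i j : ℕ, i + j ≤ k + 1 → ∀ x ∈ Set.Icc (0:ℝ) 1, ∀ y ∈ Set.Icc (0:ℝ) 1,
    |pdM i j E41 x y| ≤ C₀ * ε ^ ((1 : ℝ) - i - j) * Real.exp (-x / ε) * Real.exp (-y / ε)

/-- A discrete weak function on the `N × N` tensor-product mesh with 1D mesh
points `X`. `v0 i j` is the interior value on the element
`[X i, X (i+1)] × [X j, X (j+1)]` (for `i, j < N`); `vbH i j` (resp. `vbV i j`)
is the boundary value on the horizontal edge `[X i, X (i+1)] × {X j}` (for
`i < N`, `j ≤ N`) (resp. the vertical edge `{X i} × [X j, X (j+1)]`, for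
`i ≤ N`, `j < N`), as a function of the running coordinate; `vgH1, vgH2`
(resp. `vgV1, vgV2`) are the two components of the gradient value `𝐯_g`
on horizontal (resp. vertical) edges. -/
structure WGFun where
  v0 : ℕ → ℕ → ℝ → ℝ → ℝ
  vbH : ℕ → ℕ → ℝ → ℝ
  vbV : ℕ → ℕ → ℝ → ℝ
  vgH1 : ℕ → ℕ → ℝ → ℝ
  vgH2 : ℕ → ℕ → ℝ → ℝ
  vgV1 : ℕ → ℕ → ℝ → ℝ
  vgV2 : ℕ → ℕ → ℝ → ℝ

/-- Componentwise difference of discrete weak functions. -/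
def WGFun.sub (u v : WGFun) : WGFun where
  v0 := fun i j x y => u.v0 i j x y - v.v0 i j x y
  vbH := fun i j x => u.vbH i j x - v.vbH i j x
  vbV := fun i j y => u.vbV i j y - v.vbV i j y
  vgH1 := fun i j x => u.vgH1 i j x - v.vgH1 i j x
  vgH2 := fun i j x => u.vgH2 i j x - v.vgH2 i j x
  vgV1 := fun i j y => u.vgV1 i j y - v.vgV1 i j y
  vgV2 := fun i j y => u.vgV2 i j y - v.vgV2 i j y

/-- Membership in the weak Galerkin space `V_N`. -/
def MemVN (k N : ℕ) (v : WGFun) : Prop :=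
  (∀ i < N, ∀ j < N, IsQk k (v.v0 i j)) ∧
  (∀ i < N, ∀ j ≤ N, IsPk k (v.vbH i j) ∧ IsPk k (v.vgH1 i j) ∧ IsPk k (v.vgH2 i j)) ∧
  (∀ i ≤ N, ∀ j < N, IsPk k (v.vbV i j) ∧ IsPk k (v.vgV1 i j) ∧ IsPk k (v.vgV2 i j))

/-- Membership in `V_N⁰`: elements of `V_N` with `v_b = 0` and `𝐯_g·𝐧 = 0` on
all edges contained in `∂Ω`. -/
def MemVN0 (k N : ℕ) (v : WGFun) : Prop :=
  MemVN k N v ∧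
  (∀ i < N, (∀ x : ℝ, v.vbH i 0 x = 0) ∧ (∀ x : ℝ, v.vbH i N x = 0) ∧
            (∀ x : ℝ, v.vgH2 i 0 x = 0) ∧ (∀ x : ℝ, v.vgH2 i N x = 0)) ∧
  (∀ j < N, (∀ y : ℝ, v.vbV 0 j y = 0) ∧ (∀ y : ℝ, v.vbV N j y = 0) ∧
            (∀ y : ℝ, v.vgV1 0 j y = 0) ∧ (∀ y : ℝ, v.vgV1 N j y = 0))

/-- `D i j` is the discrete weak Laplacian `Δ_w v` of `v` on the element
`[X i, X (i+1)] × [X j, X (j+1)]`, for all `i, j < N`, characterized by the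
defining identity (outward normals: bottom `(0,-1)`, top `(0,1)`, left `(-1,0)`,
right `(1,0)`). -/
def IsWeakLap (k N : ℕ) (X : ℕ → ℝ) (v : WGFun) (D : ℕ → ℕ → ℝ → ℝ → ℝ) : Prop :=
  ∀ i < N, ∀ j < N, IsQk k (D i j) ∧
    ∀ φ : ℝ → ℝ → ℝ, IsQk k φ →
      ipT (X i) (X (i+1)) (X j) (X (j+1)) (D i j) φ =
        ipT (X i) (X (i+1)) (X j) (X (j+1)) (v.v0 i j) (lapl φ)
          - ((∫ x in (X i)..(X (i+1)), v.vbH i j x * (-(pd2 φ x (X j))))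
            + (∫ x in (X i)..(X (i+1)), v.vbH i (j+1) x * pd2 φ x (X (j+1)))
            + (∫ y in (X j)..(X (j+1)), v.vbV i j y * (-(pd1 φ (X i) y)))
            + (∫ y in (X j)..(X (j+1)), v.vbV (i+1) j y * pd1 φ (X (i+1)) y))
          + ((∫ x in (X i)..(X (i+1)), (-(v.vgH2 i j x)) * φ x (X j))
            + (∫ x in (X i)..(X (i+1)), v.vgH2 i (j+1) x * φ x (X (j+1)))
            + (∫ y in (X j)..(X (j+1)), (-(v.vgV1 i j y)) * φ (X i) y)
            + (∫ y in (X j)..(X (j+1)), v.vgV1 (i+1) j y * φ (X (i+1)) y))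

/-- `(G1 i j, G2 i j)` is the discrete weak gradient `∇_w v` of `v` on the
element `[X i, X (i+1)] × [X j, X (j+1)]`, for all `i, j < N`, characterized by
the defining identity. -/
def IsWeakGrad (k N : ℕ) (X : ℕ → ℝ) (v : WGFun) (G1 G2 : ℕ → ℕ → ℝ → ℝ → ℝ) : Prop :=
  ∀ i < N, ∀ j < N, IsQk k (G1 i j) ∧ IsQk k (G2 i j) ∧
    ∀ q1 q2 : ℝ → ℝ → ℝ, IsQk k q1 → IsQk k q2 →
      ipT (X i) (X (i+1)) (X j) (X (j+1)) (G1 i j) q1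
        + ipT (X i) (X (i+1)) (X j) (X (j+1)) (G2 i j) q2 =
        -(ipT (X i) (X (i+1)) (X j) (X (j+1)) (v.v0 i j)
            (fun x y => pd1 q1 x y + pd2 q2 x y))
          + ((∫ x in (X i)..(X (i+1)), v.vbH i j x * (-(q2 x (X j))))
            + (∫ x in (X i)..(X (i+1)), v.vbH i (j+1) x * q2 x (X (j+1)))
            + (∫ y in (X j)..(X (j+1)), v.vbV i j y * (-(q1 (X i) y)))
            + (∫ y in (X j)..(X (j+1)), v.vbV (i+1) j y * q1 (X (i+1)) y))

/-- The boundary pairing `⟨u₀ − u_b, v₀ − v_b⟩_{∂T}` on the element `(i,j)`. -/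
def sPair (X : ℕ → ℝ) (u v : WGFun) (i j : ℕ) : ℝ :=
  (∫ x in (X i)..(X (i+1)),
    (u.v0 i j x (X j) - u.vbH i j x) * (v.v0 i j x (X j) - v.vbH i j x))
  + (∫ x in (X i)..(X (i+1)),
    (u.v0 i j x (X (j+1)) - u.vbH i (j+1) x) * (v.v0 i j x (X (j+1)) - v.vbH i (j+1) x))
  + (∫ y in (X j)..(X (j+1)),
    (u.v0 i j (X i) y - u.vbV i j y) * (v.v0 i j (X i) y - v.vbV i j y))
  + (∫ y in (X j)..(X (j+1)),
    (u.v0 i j (X (i+1)) y - u.vbV (i+1) j y) * (v.v0 i j (X (i+1)) y - v.vbV (i+1) j y))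

/-- The boundary pairing `⟨∇u₀ − 𝐮_g, ∇v₀ − 𝐯_g⟩_{∂T}` on the element `(i,j)`. -/
def sPairG (X : ℕ → ℝ) (u v : WGFun) (i j : ℕ) : ℝ :=
  (∫ x in (X i)..(X (i+1)),
    ((pd1 (u.v0 i j) x (X j) - u.vgH1 i j x) * (pd1 (v.v0 i j) x (X j) - v.vgH1 i j x)
      + (pd2 (u.v0 i j) x (X j) - u.vgH2 i j x) * (pd2 (v.v0 i j) x (X j) - v.vgH2 i j x)))
  + (∫ x in (X i)..(X (i+1)),
    ((pd1 (u.v0 i j) x (X (j+1)) - u.vgH1 i (j+1) x) * (pd1 (v.v0 i j) x (X (j+1)) - v.vgH1 i (j+1) x)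
      + (pd2 (u.v0 i j) x (X (j+1)) - u.vgH2 i (j+1) x) * (pd2 (v.v0 i j) x (X (j+1)) - v.vgH2 i (j+1) x)))
  + (∫ y in (X j)..(X (j+1)),
    ((pd1 (u.v0 i j) (X i) y - u.vgV1 i j y) * (pd1 (v.v0 i j) (X i) y - v.vgV1 i j y)
      + (pd2 (u.v0 i j) (X i) y - u.vgV2 i j y) * (pd2 (v.v0 i j) (X i) y - v.vgV2 i j y)))
  + (∫ y in (X j)..(X (j+1)),
    ((pd1 (u.v0 i j) (X (i+1)) y - u.vgV1 (i+1) j y) * (pd1 (v.v0 i j) (X (i+1)) y - v.vgV1 (i+1) j y)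
      + (pd2 (u.v0 i j) (X (i+1)) y - u.vgV2 (i+1) j y) * (pd2 (v.v0 i j) (X (i+1)) y - v.vgV2 (i+1) j y)))

/-- The stabilizer `s(u,v)` with fine mesh width `h` and coarse mesh width `H`. -/
def stab (N : ℕ) (X : ℕ → ℝ) (ε h H : ℝ) (u v : WGFun) : ℝ :=
  ∑ i ∈ Finset.range N, ∑ j ∈ Finset.range N,
    (ε ^ 2 * h⁻¹ * sPairG X u v i j
      + (ε ^ 2 * (h ^ 2)⁻¹ * H⁻¹ + H⁻¹) * sPair X u v i j)

/-- The bilinear form `a(u,v)`, expressed in terms of the discrete weak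
Laplacians `Du, Dv` and weak gradients `(Gu1,Gu2), (Gv1,Gv2)` of `u` and `v`. -/
def aForm (N : ℕ) (X : ℕ → ℝ) (ε h H : ℝ) (u v : WGFun)
    (Du Dv Gu1 Gu2 Gv1 Gv2 : ℕ → ℕ → ℝ → ℝ → ℝ) : ℝ :=
  (∑ i ∈ Finset.range N, ∑ j ∈ Finset.range N,
    (ε ^ 2 * ipT (X i) (X (i+1)) (X j) (X (j+1)) (Du i j) (Dv i j)
      + ipT (X i) (X (i+1)) (X j) (X (j+1)) (Gu1 i j) (Gv1 i j)
      + ipT (X i) (X (i+1)) (X j) (X (j+1)) (Gu2 i j) (Gv2 i j)))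
  + stab N X ε h H u v

/-- `Qu = Q_N u = (Q₀u, Q_b u, 𝐐_g(∇u))`: all components are the corresponding
elementwise / edgewise L²-orthogonal projections of `u`, `u|_e` and `∇u|_e`. -/
def IsQNProj (k N : ℕ) (X : ℕ → ℝ) (u : ℝ → ℝ → ℝ) (Qu : WGFun) : Prop :=
  (∀ i < N, ∀ j < N,
    IsProjT k (X i) (X (i+1)) (X j) (X (j+1)) u (Qu.v0 i j)) ∧
  (∀ i < N, ∀ j ≤ N,
    IsProjE k (X i) (X (i+1)) (fun x => u x (X j)) (Qu.vbH i j) ∧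
    IsProjE k (X i) (X (i+1)) (fun x => pd1 u x (X j)) (Qu.vgH1 i j) ∧
    IsProjE k (X i) (X (i+1)) (fun x => pd2 u x (X j)) (Qu.vgH2 i j)) ∧
  (∀ i ≤ N, ∀ j < N,
    IsProjE k (X j) (X (j+1)) (fun y => u (X i) y) (Qu.vbV i j) ∧
    IsProjE k (X j) (X (j+1)) (fun y => pd1 u (X i) y) (Qu.vgV1 i j) ∧
    IsProjE k (X j) (X (j+1)) (fun y => pd2 u (X i) y) (Qu.vgV2 i j))

/-- `l₁(u,v) = Σ_T ε² ⟨Δu − Q₀Δu, (∇v₀ − 𝐯_g)·𝐧⟩_{∂T}`, where `P i j = Q₀Δu` on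
the element `(i,j)`. -/
def lForm1 (N : ℕ) (X : ℕ → ℝ) (ε : ℝ) (u : ℝ → ℝ → ℝ)
    (P : ℕ → ℕ → ℝ → ℝ → ℝ) (v : WGFun) : ℝ :=
  ∑ i ∈ Finset.range N, ∑ j ∈ Finset.range N, ε ^ 2 *
    ((∫ x in (X i)..(X (i+1)),
        (lapl u x (X j) - P i j x (X j)) * (-(pd2 (v.v0 i j) x (X j) - v.vgH2 i j x)))
      + (∫ x in (X i)..(X (i+1)),
        (lapl u x (X (j+1)) - P i j x (X (j+1)))
          * (pd2 (v.v0 i j) x (X (j+1)) - v.vgH2 i (j+1) x))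
      + (∫ y in (X j)..(X (j+1)),
        (lapl u (X i) y - P i j (X i) y) * (-(pd1 (v.v0 i j) (X i) y - v.vgV1 i j y)))
      + (∫ y in (X j)..(X (j+1)),
        (lapl u (X (i+1)) y - P i j (X (i+1)) y)
          * (pd1 (v.v0 i j) (X (i+1)) y - v.vgV1 (i+1) j y)))

/-- `l₂(u,v) = Σ_T ε² ⟨∇(Δu − Q₀Δu)·𝐧, v₀ − v_b⟩_{∂T}`, where `P i j = Q₀Δu` on
the element `(i,j)`. -/
def lForm2 (N : ℕ) (X : ℕ → ℝ) (ε : ℝ) (u : ℝ → ℝ → ℝ)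
    (P : ℕ → ℕ → ℝ → ℝ → ℝ) (v : WGFun) : ℝ :=
  ∑ i ∈ Finset.range N, ∑ j ∈ Finset.range N, ε ^ 2 *
    ((∫ x in (X i)..(X (i+1)),
        (-(pd2 (fun a b => lapl u a b - P i j a b) x (X j)))
          * (v.v0 i j x (X j) - v.vbH i j x))
      + (∫ x in (X i)..(X (i+1)),
        (pd2 (fun a b => lapl u a b - P i j a b) x (X (j+1)))
          * (v.v0 i j x (X (j+1)) - v.vbH i (j+1) x))
      + (∫ y in (X j)..(X (j+1)),
        (-(pd1 (fun a b => lapl u a b - P i j a b) (X i) y))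
          * (v.v0 i j (X i) y - v.vbV i j y))
      + (∫ y in (X j)..(X (j+1)),
        (pd1 (fun a b => lapl u a b - P i j a b) (X (i+1)) y)
          * (v.v0 i j (X (i+1)) y - v.vbV (i+1) j y)))

/-- `l₃(u,v) = Σ_T ⟨(∇u − 𝐐_N∇u)·𝐧, v₀ − v_b⟩_{∂T}`, where `(P1 i j, P2 i j) =
𝐐_N(∇u)` on the element `(i,j)`. -/
def lForm3 (N : ℕ) (X : ℕ → ℝ) (u : ℝ → ℝ → ℝ)
    (P1 P2 : ℕ → ℕ → ℝ → ℝ → ℝ) (v : WGFun) : ℝ :=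
  ∑ i ∈ Finset.range N, ∑ j ∈ Finset.range N,
    ((∫ x in (X i)..(X (i+1)),
        (-(pd2 u x (X j) - P2 i j x (X j))) * (v.v0 i j x (X j) - v.vbH i j x))
      + (∫ x in (X i)..(X (i+1)),
        (pd2 u x (X (j+1)) - P2 i j x (X (j+1))) * (v.v0 i j x (X (j+1)) - v.vbH i (j+1) x))
      + (∫ y in (X j)..(X (j+1)),
        (-(pd1 u (X i) y - P1 i j (X i) y)) * (v.v0 i j (X i) y - v.vbV i j y))
      + (∫ y in (X j)..(X (j+1)),
        (pd1 u (X (i+1)) y - P1 i j (X (i+1)) y) * (v.v0 i j (X (i+1)) y - v.vbV (i+1) j y)))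

/-!
The projection `Q_N` commutes with the weak derivatives: Green's formula on an element `T`
together with the orthogonality of `Q₀` and of the edge projections gives
`(Δ_w Q_N u, φ)_T = (Q₀Δu, φ)_T` and `(∇_w Q_N u, 𝐪)_T = (𝐐_N∇u, 𝐪)_T` for `φ, 𝐪 ∈ Q_k(T)`.
Testing the definitions of `Δ_w v` and `∇_w v` with `Q₀Δu` and `𝐐_N∇u`, and integrating by
parts against `v₀` (once more using the orthogonality of `Q₀` and `𝐐_N`), writes
`ε²(Q₀Δu, Δ_w v)_T + (𝐐_N∇u, ∇_w v)_T − (f, v₀)_T` as the `T`-parts of `l₁ − l₂ + l₃` plus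
`ε²⟨Δu, 𝐯_g·𝐧⟩_{∂T} − ε²⟨∇Δu·𝐧, v_b⟩_{∂T} + ⟨∇u·𝐧, v_b⟩_{∂T}`. Since `v_b` and `𝐯_g` are single
valued on interior edges and `v_b`, `𝐯_g·𝐧` vanish on `∂Ω`, these edge terms cancel in the sum
over the mesh. Subtracting the scheme `a(u_N, v) = (f, v₀)` then gives the error equation.
-/

open Finset

section Polynomials

variable {k : ℕ}

lemma isQk_iff {v : ℝ → ℝ → ℝ} : IsQk k v ↔ ∃ c : ℕ → ℕ → ℝ, ∀ x y : ℝ,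
    v x y = ∑ i ∈ range (k + 1), ∑ j ∈ range (k + 1), c i j * x ^ i * y ^ j := by
  let e : ℕ → ℕ → Fin 2 →₀ ℕ := fun i j => Finsupp.single 0 i + Finsupp.single 1 j
  have e₀ : ∀ i j, e i j 0 = i := by simp [e]
  have e₁ : ∀ i j, e i j 1 = j := by simp [e]
  constructor
  · rintro ⟨p, hdeg, hval⟩
    refine ⟨fun i j => p.coeff (e i j), fun x y => ?_⟩
    have hsupp : p.support ⊆ (range (k + 1) ×ˢ range (k + 1)).image fun q => e q.1 q.2 := by
      intro d hd
      refine mem_image.2 ⟨(d 0, d 1), mem_product.2 ⟨?_, ?_⟩, ?_⟩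
      · exact mem_range.2 <| Nat.lt_succ_of_le <|
          (MvPolynomial.monomial_le_degreeOf 0 hd).trans (hdeg 0)
      · exact mem_range.2 <| Nat.lt_succ_of_le <|
          (MvPolynomial.monomial_le_degreeOf 1 hd).trans (hdeg 1)
      · ext a; fin_cases a <;> simp [e]
    have hinj : Set.InjOn (fun q : ℕ × ℕ => e q.1 q.2) ↑(range (k + 1) ×ˢ range (k + 1)) :=
      fun a _ b _ hab => Prod.ext (by simpa [e₀] using congrArg (· 0) hab)
        (by simpa [e₁] using congrArg (· 1) hab)
    rw [hval, MvPolynomial.eval_eq', sum_subset hsupp fun d _ hd => by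
      rw [MvPolynomial.notMem_support_iff.1 hd, zero_mul], sum_image hinj, sum_product]
    simp [Fin.prod_univ_two, e₀, e₁, mul_assoc]
  · rintro ⟨c, hc⟩
    refine ⟨∑ i ∈ range (k + 1), ∑ j ∈ range (k + 1), MvPolynomial.monomial (e i j) (c i j),
      fun a => ?_, fun x y => ?_⟩
    · refine (MvPolynomial.degreeOf_sum_le _ _ _).trans (Finset.sup_le fun i hi => ?_)
      refine (MvPolynomial.degreeOf_sum_le _ _ _).trans (Finset.sup_le fun j hj => ?_)
      refine MvPolynomial.degreeOf_le_iff.2 fun m hm => ?_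
      rw [mem_singleton.1 (MvPolynomial.support_monomial_subset hm)]
      have := mem_range.1 hi; have := mem_range.1 hj
      fin_cases a <;> simp [e] <;> omega
    · simp [hc, map_sum, MvPolynomial.eval_monomial, Finsupp.prod_fintype, Fin.prod_univ_two,
        e₀, e₁, mul_assoc]

lemma IsQk.add {v w : ℝ → ℝ → ℝ} (hv : IsQk k v) (hw : IsQk k w) :
    IsQk k fun x y => v x y + w x y := by
  obtain ⟨p, hp, hpv⟩ := hv
  obtain ⟨q, hq, hqw⟩ := hw
  exact ⟨p + q, fun i => (MvPolynomial.degreeOf_add_le i p q).trans (max_le (hp i) (hq i)),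
    by simp [hpv, hqw]⟩

lemma IsQk.swap {v : ℝ → ℝ → ℝ} (hv : IsQk k v) : IsQk k fun x y => v y x := by
  obtain ⟨c, hc⟩ := isQk_iff.1 hv
  refine isQk_iff.2 ⟨fun i j => c j i, fun x y => ?_⟩
  rw [hc, sum_comm]
  simp only [mul_right_comm]

lemma IsQk.pd1 {v : ℝ → ℝ → ℝ} (hv : IsQk k v) : IsQk k (pd1 v) := by
  obtain ⟨c, hc⟩ := isQk_iff.1 hv
  refine isQk_iff.2 ⟨fun i j => if i < k then (i + 1) * c (i + 1) j else 0, fun x y => ?_⟩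
  have hderiv : HasDerivAt (fun t => v t y) (∑ i ∈ range (k + 1), ∑ j ∈ range (k + 1),
      c i j * (i * x ^ (i - 1)) * y ^ j) x := by
    simp only [hc]
    exact HasDerivAt.fun_sum fun i _ => HasDerivAt.fun_sum fun j _ =>
      ((hasDerivAt_pow i x).const_mul _).mul_const _
  change deriv (fun t => v t y) x = _
  rw [hderiv.deriv, sum_range_succ']
  conv_rhs => rw [sum_range_succ]
  simp only [CharP.cast_eq_zero, zero_mul, mul_zero, sum_const_zero, add_zero, lt_irrefl,
    if_false]
  refine sum_congr rfl fun i hi => sum_congr rfl fun j _ => ?_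
  rw [if_pos (mem_range.1 hi), Nat.add_sub_cancel]
  push_cast
  ring

-- `pd2 v` is definitionally `pd1` of the transpose of `v`, transposed back.
lemma IsQk.pd2 {v : ℝ → ℝ → ℝ} (hv : IsQk k v) : IsQk k (pd2 v) :=
  hv.swap.pd1.swap

lemma IsQk.lapl {v : ℝ → ℝ → ℝ} (hv : IsQk k v) : IsQk k (lapl v) :=
  hv.pd1.pd1.add hv.pd2.pd2

lemma IsQk.isPk_fst {v : ℝ → ℝ → ℝ} (hv : IsQk k v) (y : ℝ) : IsPk k fun x => v x y := by
  obtain ⟨c, hc⟩ := isQk_iff.1 hv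
  refine ⟨∑ i ∈ range (k + 1),
      Polynomial.C (∑ j ∈ range (k + 1), c i j * y ^ j) * Polynomial.X ^ i,
    Polynomial.natDegree_sum_le_of_forall_le _ _ fun i hi => ?_, fun x => ?_⟩
  · exact Polynomial.natDegree_C_mul_X_pow_le _ _ |>.trans (Nat.lt_succ_iff.1 (mem_range.1 hi))
  · simp only [hc, Polynomial.eval_finsetSum, Polynomial.eval_mul, Polynomial.eval_C,
      Polynomial.eval_pow, Polynomial.eval_X, sum_mul]
    exact sum_congr rfl fun i _ => sum_congr rfl fun j _ => by ring

lemma IsQk.isPk_snd {v : ℝ → ℝ → ℝ} (hv : IsQk k v) (x : ℝ) : IsPk k fun y => v x y :=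
  hv.swap.isPk_fst x

lemma IsQk.contDiff {v : ℝ → ℝ → ℝ} (hv : IsQk k v) {n : WithTop ℕ∞} :
    ContDiff ℝ n (Function.uncurry v) := by
  obtain ⟨c, hc⟩ := isQk_iff.1 hv
  have : Function.uncurry v = fun p : ℝ × ℝ =>
      ∑ i ∈ range (k + 1), ∑ j ∈ range (k + 1), c i j * p.1 ^ i * p.2 ^ j :=
    funext fun p => hc p.1 p.2
  rw [this]
  fun_prop

lemma IsQk.continuous {v : ℝ → ℝ → ℝ} (hv : IsQk k v) : Continuous (Function.uncurry v) :=
  hv.contDiff (n := 0).continuous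

lemma IsPk.continuous {f : ℝ → ℝ} (hf : IsPk k f) : Continuous f := by
  obtain ⟨p, -, hp⟩ := hf
  simpa only [← hp] using p.continuous

end Polynomials

section PartialDerivatives

variable {F G : ℝ → ℝ → ℝ}

lemma hasDerivAt_pd1 (hF : Differentiable ℝ (Function.uncurry F)) (x y : ℝ) :
    HasDerivAt (fun t => F t y) (pd1 F x y) x := by
  have h := (hF (x, y)).hasFDerivAt.comp_hasDerivAt x
    ((hasDerivAt_id x).prodMk (hasDerivAt_const x y))
  exact h.differentiableAt.hasDerivAt

lemma hasDerivAt_pd2 (hF : Differentiable ℝ (Function.uncurry F)) (x y : ℝ) :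
    HasDerivAt (fun t => F x t) (pd2 F x y) y := by
  have h := (hF (x, y)).hasFDerivAt.comp_hasDerivAt y
    ((hasDerivAt_const y x).prodMk (hasDerivAt_id y))
  exact h.differentiableAt.hasDerivAt

lemma uncurry_pd1 (hF : Differentiable ℝ (Function.uncurry F)) :
    Function.uncurry (pd1 F) = fun p => fderiv ℝ (Function.uncurry F) p (1, 0) := by
  funext p
  exact ((hF p).hasFDerivAt.comp_hasDerivAt p.1
    ((hasDerivAt_id p.1).prodMk (hasDerivAt_const p.1 p.2))).deriv

lemma uncurry_pd2 (hF : Differentiable ℝ (Function.uncurry F)) :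
    Function.uncurry (pd2 F) = fun p => fderiv ℝ (Function.uncurry F) p (0, 1) := by
  funext p
  exact ((hF p).hasFDerivAt.comp_hasDerivAt p.2
    ((hasDerivAt_const p.2 p.1).prodMk (hasDerivAt_id p.2))).deriv

lemma ContDiff.pd1 {n : WithTop ℕ∞} (hF : ContDiff ℝ (n + 1) (Function.uncurry F)) :
    ContDiff ℝ n (Function.uncurry (pd1 F)) := by
  rw [uncurry_pd1 (hF.differentiable (by simp))]
  exact (hF.fderiv_right le_rfl).clm_apply contDiff_const

lemma ContDiff.pd2 {n : WithTop ℕ∞} (hF : ContDiff ℝ (n + 1) (Function.uncurry F)) :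
    ContDiff ℝ n (Function.uncurry (pd2 F)) := by
  rw [uncurry_pd2 (hF.differentiable (by simp))]
  exact (hF.fderiv_right le_rfl).clm_apply contDiff_const

lemma ContDiff.lapl {n : WithTop ℕ∞} (hF : ContDiff ℝ (n + 2) (Function.uncurry F)) :
    ContDiff ℝ n (Function.uncurry (lapl F)) := by
  rw [show n + 2 = n + 1 + 1 by rw [add_assoc]; rfl] at hF
  exact hF.pd1.pd1.add hF.pd2.pd2

lemma continuous_pd1 (hF : ContDiff ℝ 1 (Function.uncurry F)) :
    Continuous (Function.uncurry (pd1 F)) :=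
  (ContDiff.pd1 (n := 0) (by simpa using hF)).continuous

lemma continuous_pd2 (hF : ContDiff ℝ 1 (Function.uncurry F)) :
    Continuous (Function.uncurry (pd2 F)) :=
  (ContDiff.pd2 (n := 0) (by simpa using hF)).continuous

lemma pd1_sub (hF : Differentiable ℝ (Function.uncurry F))
    (hG : Differentiable ℝ (Function.uncurry G)) :
    pd1 (fun x y => F x y - G x y) = fun x y => pd1 F x y - pd1 G x y :=
  funext₂ fun x y => ((hasDerivAt_pd1 hF x y).sub (hasDerivAt_pd1 hG x y)).deriv

lemma pd2_sub (hF : Differentiable ℝ (Function.uncurry F))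
    (hG : Differentiable ℝ (Function.uncurry G)) :
    pd2 (fun x y => F x y - G x y) = fun x y => pd2 F x y - pd2 G x y :=
  funext₂ fun x y => ((hasDerivAt_pd2 hF x y).sub (hasDerivAt_pd2 hG x y)).deriv

lemma integral_deriv_mul_eq_sub_integral {f g f' g' : ℝ → ℝ} (hf : ∀ t, HasDerivAt f (f' t) t)
    (hg : ∀ t, HasDerivAt g (g' t) t) (hf' : Continuous f') (hg' : Continuous g') (a b : ℝ) :
    ∫ t in a..b, f' t * g t = f b * g b - f a * g a - ∫ t in a..b, f t * g' t := by
  have h := intervalIntegral.integral_mul_deriv_eq_deriv_mul (fun t _ => hg t) (fun t _ => hf t)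
    (hg'.intervalIntegrable a b) (hf'.intervalIntegrable a b)
  simp only [mul_comm (g _), mul_comm (g' _)] at h
  exact h

end PartialDerivatives

open Classical in
/-- `f` as a continuous map on `ℝ × ℝ`, with junk value `0` when `f` is not continuous.
Working with continuous maps makes the pairings below bilinear without integrability side
conditions. -/
def toC (f : ℝ → ℝ → ℝ) : C(ℝ × ℝ, ℝ) :=
  if h : Continuous (Function.uncurry f) then ⟨_, h⟩ else 0

lemma toC_apply {f : ℝ → ℝ → ℝ} (hf : Continuous (Function.uncurry f)) (p : ℝ × ℝ) :
    toC f p = f p.1 p.2 := by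
  rw [toC, dif_pos hf]
  rfl

lemma toC_add {f g : ℝ → ℝ → ℝ} (hf : Continuous (Function.uncurry f))
    (hg : Continuous (Function.uncurry g)) : toC (fun x y => f x y + g x y) = toC f + toC g := by
  ext p
  rw [ContinuousMap.add_apply, toC_apply hf, toC_apply hg, toC_apply (by exact hf.add hg)]

lemma toC_sub {f g : ℝ → ℝ → ℝ} (hf : Continuous (Function.uncurry f))
    (hg : Continuous (Function.uncurry g)) : toC (fun x y => f x y - g x y) = toC f - toC g := by
  ext p
  rw [ContinuousMap.sub_apply, toC_apply hf, toC_apply hg, toC_apply (by exact hf.sub hg)]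

/-- `[x₀, x₁] × [y₀, y₁]`, with edges numbered bottom `0`, top `1`, left `2`, right `3`; the bottom
and top edges are parametrized by `x`, the left and right ones by `y`. -/
structure Rect where
  x₀ : ℝ
  x₁ : ℝ
  y₀ : ℝ
  y₁ : ℝ

/-- The normal component `𝐠·𝐧` of edge data `𝐠 = (g₁, g₂)` on the four edges. -/
def normal (g₁ g₂ : Fin 4 → C(ℝ, ℝ)) : Fin 4 → C(ℝ, ℝ) := ![-g₂ 0, g₂ 1, -g₁ 2, g₁ 3]

lemma normal_add (g₁ g₂ h₁ h₂ : Fin 4 → C(ℝ, ℝ)) :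
    normal (g₁ + h₁) (g₂ + h₂) = normal g₁ g₂ + normal h₁ h₂ := by
  ext e t; fin_cases e <;> simp [normal] <;> ring

lemma normal_sub (g₁ g₂ h₁ h₂ : Fin 4 → C(ℝ, ℝ)) :
    normal (g₁ - h₁) (g₂ - h₂) = normal g₁ g₂ - normal h₁ h₂ := by
  ext e t; fin_cases e <;> simp [normal] <;> ring

namespace Rect

variable (T : Rect)

def integral : C(ℝ × ℝ, ℝ) →ₗ[ℝ] ℝ where
  toFun f := ∫ x in T.x₀..T.x₁, ∫ y in T.y₀..T.y₁, f (x, y)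
  map_add' f g := by
    simp only [ContinuousMap.add_apply]
    rw [← intervalIntegral.integral_add (by apply Continuous.intervalIntegrable; fun_prop)
      (by apply Continuous.intervalIntegrable; fun_prop)]
    exact intervalIntegral.integral_congr fun x _ => intervalIntegral.integral_add
      (by apply Continuous.intervalIntegrable; fun_prop)
      (by apply Continuous.intervalIntegrable; fun_prop)
  map_smul' r f := by
    simp only [ContinuousMap.smul_apply, smul_eq_mul, intervalIntegral.integral_const_mul,
      RingHom.id_apply]

def edgeIntegral : (Fin 4 → C(ℝ, ℝ)) →ₗ[ℝ] ℝ where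
  toFun f := ∑ e, ∫ t in ![T.x₀, T.x₀, T.y₀, T.y₀] e..![T.x₁, T.x₁, T.y₁, T.y₁] e, f e t
  map_add' f g := by
    rw [← Finset.sum_add_distrib]
    exact Finset.sum_congr rfl fun e _ => intervalIntegral.integral_add
      ((f e).continuous.intervalIntegrable ..) ((g e).continuous.intervalIntegrable ..)
  map_smul' r f := by
    simp [intervalIntegral.integral_const_mul, Finset.mul_sum]

/-- The bilinear form `(f, g)_T`. -/
def pair : C(ℝ × ℝ, ℝ) →ₗ[ℝ] C(ℝ × ℝ, ℝ) →ₗ[ℝ] ℝ :=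
  LinearMap.mk₂ ℝ (fun f g => T.integral (f * g))
    (fun f f' g => by rw [add_mul, map_add])
    (fun r f g => by rw [smul_mul_assoc, map_smul, smul_eq_mul])
    (fun f g g' => by rw [mul_add, map_add])
    (fun r f g => by rw [mul_smul_comm, map_smul, smul_eq_mul])

/-- The bilinear form `⟨f, g⟩_{∂T}`. -/
def edgePair : (Fin 4 → C(ℝ, ℝ)) →ₗ[ℝ] (Fin 4 → C(ℝ, ℝ)) →ₗ[ℝ] ℝ :=
  LinearMap.mk₂ ℝ (fun f g => T.edgeIntegral (f * g))
    (fun f f' g => by rw [add_mul, map_add])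
    (fun r f g => by rw [smul_mul_assoc, map_smul, smul_eq_mul])
    (fun f g g' => by rw [mul_add, map_add])
    (fun r f g => by rw [mul_smul_comm, map_smul, smul_eq_mul])

def trace (f : C(ℝ × ℝ, ℝ)) : Fin 4 → C(ℝ, ℝ) :=
  ![⟨fun x => f (x, T.y₀), by fun_prop⟩, ⟨fun x => f (x, T.y₁), by fun_prop⟩,
    ⟨fun y => f (T.x₀, y), by fun_prop⟩, ⟨fun y => f (T.x₁, y), by fun_prop⟩]

/-- The normal derivative `∇w·𝐧` on the four edges. -/
def dn (w : ℝ → ℝ → ℝ) : Fin 4 → C(ℝ, ℝ) :=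
  normal (T.trace (toC (pd1 w))) (T.trace (toC (pd2 w)))

lemma pair_apply (f g : C(ℝ × ℝ, ℝ)) :
    T.pair f g = ∫ x in T.x₀..T.x₁, ∫ y in T.y₀..T.y₁, f (x, y) * g (x, y) := rfl

lemma pair_apply_swap (f g : C(ℝ × ℝ, ℝ)) :
    T.pair f g = ∫ y in T.y₀..T.y₁, ∫ x in T.x₀..T.x₁, f (x, y) * g (x, y) :=
  intervalIntegral_intervalIntegral_swap <|
    ((by fun_prop : Continuous fun p : ℝ × ℝ => f (p.1, p.2) * g (p.1, p.2)).continuousOn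
      |>.integrableOn_compact (isCompact_uIcc.prod isCompact_uIcc)).mono_set
      (Set.prod_mono Set.uIoc_subset_uIcc Set.uIoc_subset_uIcc)

lemma pair_comm (f g : C(ℝ × ℝ, ℝ)) : T.pair f g = T.pair g f := by
  simp only [pair_apply, mul_comm]

lemma edgeIntegral_apply (f : Fin 4 → C(ℝ, ℝ)) :
    T.edgeIntegral f = (∫ x in T.x₀..T.x₁, f 0 x) + (∫ x in T.x₀..T.x₁, f 1 x)
      + (∫ y in T.y₀..T.y₁, f 2 y) + (∫ y in T.y₀..T.y₁, f 3 y) := by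
  simp only [edgeIntegral, LinearMap.coe_mk, AddHom.coe_mk, Fin.sum_univ_four]
  rfl

lemma edgePair_eq_edgeIntegral (f g : Fin 4 → C(ℝ, ℝ)) :
    T.edgePair f g = T.edgeIntegral (f * g) :=
  rfl

lemma edgePair_apply (f g : Fin 4 → C(ℝ, ℝ)) :
    T.edgePair f g = (∫ x in T.x₀..T.x₁, f 0 x * g 0 x) + (∫ x in T.x₀..T.x₁, f 1 x * g 1 x)
      + (∫ y in T.y₀..T.y₁, f 2 y * g 2 y) + (∫ y in T.y₀..T.y₁, f 3 y * g 3 y) :=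
  T.edgeIntegral_apply (f * g)

lemma edgePair_comm (f g : Fin 4 → C(ℝ, ℝ)) : T.edgePair f g = T.edgePair g f := by
  simp only [edgePair_apply, mul_comm]

lemma trace_sub (f g : C(ℝ × ℝ, ℝ)) : T.trace (f - g) = T.trace f - T.trace g := by
  ext e t; fin_cases e <;> rfl

lemma dn_sub {F G : ℝ → ℝ → ℝ} (hF : ContDiff ℝ 1 (Function.uncurry F))
    (hG : ContDiff ℝ 1 (Function.uncurry G)) :
    T.dn (fun x y => F x y - G x y) = T.dn F - T.dn G := by
  have hF' := hF.differentiable one_ne_zero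
  have hG' := hG.differentiable one_ne_zero
  rw [dn, dn, dn, pd1_sub hF' hG', pd2_sub hF' hG', toC_sub (continuous_pd1 hF) (continuous_pd1 hG),
    toC_sub (continuous_pd2 hF) (continuous_pd2 hG), trace_sub, trace_sub, normal_sub]

section Green

variable {F G F₁ F₂ w φ : ℝ → ℝ → ℝ}

lemma pair_pd1 (hF : ContDiff ℝ 1 (Function.uncurry F)) (hG : ContDiff ℝ 1 (Function.uncurry G)) :
    T.pair (toC (pd1 F)) (toC G) = T.edgePair (normal (T.trace (toC F)) 0) (T.trace (toC G))
      - T.pair (toC F) (toC (pd1 G)) := by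
  have inner : ∀ y, ∫ x in T.x₀..T.x₁, toC (pd1 F) (x, y) * toC G (x, y) =
      toC F (T.x₁, y) * toC G (T.x₁, y) - toC F (T.x₀, y) * toC G (T.x₀, y)
        - ∫ x in T.x₀..T.x₁, toC F (x, y) * toC (pd1 G) (x, y) := fun y => by
    simp only [toC_apply hF.continuous, toC_apply hG.continuous, toC_apply (continuous_pd1 hF),
      toC_apply (continuous_pd1 hG)]
    exact integral_deriv_mul_eq_sub_integral
      (fun t => hasDerivAt_pd1 (hF.differentiable one_ne_zero) t y)
      (fun t => hasDerivAt_pd1 (hG.differentiable one_ne_zero) t y)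
      (by have := continuous_pd1 hF; fun_prop) (by have := continuous_pd1 hG; fun_prop) _ _
  rw [pair_apply_swap, pair_apply_swap, edgePair_apply,
    intervalIntegral.integral_congr fun y _ => inner y]
  simp only [trace, normal, Pi.zero_apply, neg_zero, Fin.isValue, Matrix.cons_val,
    Matrix.cons_val_zero, Matrix.cons_val_one, ContinuousMap.zero_apply, ContinuousMap.coe_mk,
    ContinuousMap.neg_apply, zero_mul, neg_mul, intervalIntegral.integral_zero,
    intervalIntegral.integral_neg, add_zero, zero_add]
  rw [intervalIntegral.integral_sub (by apply Continuous.intervalIntegrable; fun_prop)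
      (by apply Continuous.intervalIntegrable; fun_prop),
    intervalIntegral.integral_sub (by apply Continuous.intervalIntegrable; fun_prop)
      (by apply Continuous.intervalIntegrable; fun_prop)]
  ring

lemma pair_pd2 (hF : ContDiff ℝ 1 (Function.uncurry F)) (hG : ContDiff ℝ 1 (Function.uncurry G)) :
    T.pair (toC (pd2 F)) (toC G) = T.edgePair (normal 0 (T.trace (toC F))) (T.trace (toC G))
      - T.pair (toC F) (toC (pd2 G)) := by
  have inner : ∀ x, ∫ y in T.y₀..T.y₁, toC (pd2 F) (x, y) * toC G (x, y) =
      toC F (x, T.y₁) * toC G (x, T.y₁) - toC F (x, T.y₀) * toC G (x, T.y₀)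
        - ∫ y in T.y₀..T.y₁, toC F (x, y) * toC (pd2 G) (x, y) := fun x => by
    simp only [toC_apply hF.continuous, toC_apply hG.continuous, toC_apply (continuous_pd2 hF),
      toC_apply (continuous_pd2 hG)]
    exact integral_deriv_mul_eq_sub_integral (hasDerivAt_pd2 (hF.differentiable one_ne_zero) x)
      (hasDerivAt_pd2 (hG.differentiable one_ne_zero) x)
      (by have := continuous_pd2 hF; fun_prop) (by have := continuous_pd2 hG; fun_prop) _ _
  rw [pair_apply, pair_apply, edgePair_apply, intervalIntegral.integral_congr fun x _ => inner x]
  simp only [trace, normal, Pi.zero_apply, neg_zero, Fin.isValue, Matrix.cons_val,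
    Matrix.cons_val_zero, Matrix.cons_val_one, ContinuousMap.zero_apply, ContinuousMap.coe_mk,
    ContinuousMap.neg_apply, zero_mul, neg_mul, intervalIntegral.integral_zero,
    intervalIntegral.integral_neg, add_zero]
  rw [intervalIntegral.integral_sub (by apply Continuous.intervalIntegrable; fun_prop)
      (by apply Continuous.intervalIntegrable; fun_prop),
    intervalIntegral.integral_sub (by apply Continuous.intervalIntegrable; fun_prop)
      (by apply Continuous.intervalIntegrable; fun_prop)]
  ring

lemma pair_div (h₁ : ContDiff ℝ 1 (Function.uncurry F₁)) (h₂ : ContDiff ℝ 1 (Function.uncurry F₂))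
    (hG : ContDiff ℝ 1 (Function.uncurry G)) :
    T.pair (toC (pd1 F₁) + toC (pd2 F₂)) (toC G)
      = T.edgePair (normal (T.trace (toC F₁)) (T.trace (toC F₂))) (T.trace (toC G))
        - T.pair (toC F₁) (toC (pd1 G)) - T.pair (toC F₂) (toC (pd2 G)) := by
  rw [map_add, LinearMap.add_apply, T.pair_pd1 h₁ hG, T.pair_pd2 h₂ hG,
    show normal (T.trace (toC F₁)) (T.trace (toC F₂))
      = normal (T.trace (toC F₁)) 0 + normal 0 (T.trace (toC F₂)) by
        rw [← normal_add, add_zero, zero_add],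
    map_add, LinearMap.add_apply]
  ring

lemma toC_lapl (hw : ContDiff ℝ 2 (Function.uncurry w)) :
    toC (lapl w) = toC (pd1 (pd1 w)) + toC (pd2 (pd2 w)) :=
  toC_add (ContDiff.pd1 (n := 0) (ContDiff.pd1 (n := 1) hw)).continuous
    (ContDiff.pd2 (n := 0) (ContDiff.pd2 (n := 1) hw)).continuous

lemma pair_lapl (hw : ContDiff ℝ 2 (Function.uncurry w)) (hφ : ContDiff ℝ 2 (Function.uncurry φ)) :
    T.pair (toC (lapl w)) (toC φ) = T.pair (toC w) (toC (lapl φ))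
      + T.edgePair (T.dn w) (T.trace (toC φ)) - T.edgePair (T.trace (toC w)) (T.dn φ) := by
  have gw := T.pair_div (ContDiff.pd1 (n := 1) hw) (ContDiff.pd2 (n := 1) hw)
    (hφ.of_le (by norm_num))
  have gφ := T.pair_div (ContDiff.pd1 (n := 1) hφ) (ContDiff.pd2 (n := 1) hφ)
    (hw.of_le (by norm_num))
  rw [toC_lapl hw, gw, toC_lapl hφ, T.pair_comm _ (toC (pd1 (pd1 φ)) + _), gφ, dn, dn,
    T.edgePair_comm (T.trace (toC w)), T.pair_comm (toC (pd1 w)), T.pair_comm (toC (pd2 w))]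
  ring

end Green

end Rect

open Classical in
/-- `f` as a continuous map on `ℝ`, with junk value `0` when `f` is not continuous. -/
def toC₁ (f : ℝ → ℝ) : C(ℝ, ℝ) := if h : Continuous f then ⟨f, h⟩ else 0

lemma coe_toC₁ {f : ℝ → ℝ} (hf : Continuous f) : ⇑(toC₁ f) = f := by
  rw [toC₁, dif_pos hf]
  rfl

lemma toC₁_sub {f g : ℝ → ℝ} (hf : Continuous f) (hg : Continuous g) :
    toC₁ (fun x => f x - g x) = toC₁ f - toC₁ g := by
  ext x
  rw [ContinuousMap.sub_apply, coe_toC₁ hf, coe_toC₁ hg,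
    coe_toC₁ (f := fun x => f x - g x) (by fun_prop)]

-- Reducible, so that `ring` identifies `meshRect X i j` with the `Rect.mk` produced by
-- `ipT_eq_pair`.
abbrev meshRect (X : ℕ → ℝ) (i j : ℕ) : Rect := ⟨X i, X (i + 1), X j, X (j + 1)⟩

/-- The data on `∂(meshRect X i j)` of families `gH`, `gV` living on the horizontal and the
vertical edges of the mesh, indexed as in `WGFun`. -/
def edgeData (gH gV : ℕ → ℕ → ℝ → ℝ) (i j : ℕ) : Fin 4 → C(ℝ, ℝ) :=
  ![toC₁ (gH i j), toC₁ (gH i (j + 1)), toC₁ (gV i j), toC₁ (gV (i + 1) j)]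

lemma edgeData_sub {gH gV hH hV : ℕ → ℕ → ℝ → ℝ} {i j : ℕ} (hgH₀ : Continuous (gH i j))
    (hgH₁ : Continuous (gH i (j + 1))) (hgV₀ : Continuous (gV i j))
    (hgV₁ : Continuous (gV (i + 1) j)) (hhH₀ : Continuous (hH i j))
    (hhH₁ : Continuous (hH i (j + 1))) (hhV₀ : Continuous (hV i j))
    (hhV₁ : Continuous (hV (i + 1) j)) :
    edgeData (fun i j x => gH i j x - hH i j x) (fun i j y => gV i j y - hV i j y) i j
      = edgeData gH gV i j - edgeData hH hV i j := by
  simp only [edgeData, toC₁_sub hgH₀ hhH₀, toC₁_sub hgH₁ hhH₁, toC₁_sub hgV₀ hhV₀,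
    toC₁_sub hgV₁ hhV₁]
  ext e : 1
  fin_cases e <;> rfl

lemma Rect.edgePair_normal_edgeData (T : Rect) (f : Fin 4 → C(ℝ, ℝ))
    (gH₁ gV₁ gH₂ gV₂ : ℕ → ℕ → ℝ → ℝ) (i j : ℕ) :
    T.edgePair f (normal (edgeData gH₁ gV₁ i j) (edgeData gH₂ gV₂ i j))
      = T.edgePair (normal f f) (edgeData gH₂ gV₁ i j) := by
  rw [Rect.edgePair_eq_edgeIntegral, Rect.edgePair_eq_edgeIntegral]
  congr 1
  ext e t
  fin_cases e <;> simp [normal, edgeData]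

structure WGFun.ContOnElem (w : WGFun) (i j : ℕ) : Prop where
  v0 : Continuous (Function.uncurry (w.v0 i j))
  bH₀ : Continuous (w.vbH i j)
  bH₁ : Continuous (w.vbH i (j + 1))
  bV₀ : Continuous (w.vbV i j)
  bV₁ : Continuous (w.vbV (i + 1) j)
  gH1₀ : Continuous (w.vgH1 i j)
  gH1₁ : Continuous (w.vgH1 i (j + 1))
  gV1₀ : Continuous (w.vgV1 i j)
  gV1₁ : Continuous (w.vgV1 (i + 1) j)
  gH2₀ : Continuous (w.vgH2 i j)
  gH2₁ : Continuous (w.vgH2 i (j + 1))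
  gV2₀ : Continuous (w.vgV2 i j)
  gV2₁ : Continuous (w.vgV2 (i + 1) j)

lemma WGFun.ContOnElem.sub {u w : WGFun} {i j : ℕ} (hu : u.ContOnElem i j)
    (hw : w.ContOnElem i j) : (u.sub w).ContOnElem i j :=
  ⟨by exact hu.v0.sub hw.v0, hu.bH₀.sub hw.bH₀, hu.bH₁.sub hw.bH₁, hu.bV₀.sub hw.bV₀,
    hu.bV₁.sub hw.bV₁, hu.gH1₀.sub hw.gH1₀, hu.gH1₁.sub hw.gH1₁, hu.gV1₀.sub hw.gV1₀,
    hu.gV1₁.sub hw.gV1₁, hu.gH2₀.sub hw.gH2₀, hu.gH2₁.sub hw.gH2₁, hu.gV2₀.sub hw.gV2₀,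
    hu.gV2₁.sub hw.gV2₁⟩

lemma MemVN.contOnElem {k N : ℕ} {w : WGFun} (hw : MemVN k N w) {i j : ℕ} (hi : i < N)
    (hj : j < N) : w.ContOnElem i j :=
  have hH₀ := hw.2.1 i hi j hj.le
  have hH₁ := hw.2.1 i hi (j + 1) hj
  have hV₀ := hw.2.2 i hi.le j hj
  have hV₁ := hw.2.2 (i + 1) hi j hj
  ⟨(hw.1 i hi j hj).continuous, hH₀.1.continuous, hH₁.1.continuous, hV₀.1.continuous,
    hV₁.1.continuous, hH₀.2.1.continuous, hH₁.2.1.continuous, hV₀.2.1.continuous,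
    hV₁.2.1.continuous, hH₀.2.2.continuous, hH₁.2.2.continuous, hV₀.2.2.continuous,
    hV₁.2.2.continuous⟩

lemma IsQNProj.memVN {k N : ℕ} {X : ℕ → ℝ} {u : ℝ → ℝ → ℝ} {w : WGFun}
    (hw : IsQNProj k N X u w) : MemVN k N w :=
  ⟨fun i hi j hj => (hw.1 i hi j hj).1,
    fun i hi j hj => ⟨(hw.2.1 i hi j hj).1.1, (hw.2.1 i hi j hj).2.1.1, (hw.2.1 i hi j hj).2.2.1⟩,
    fun i hi j hj => ⟨(hw.2.2 i hi j hj).1.1, (hw.2.2 i hi j hj).2.1.1, (hw.2.2 i hi j hj).2.2.1⟩⟩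

lemma ipT_eq_pair {a b c d : ℝ} {f g : ℝ → ℝ → ℝ} (hf : Continuous (Function.uncurry f))
    (hg : Continuous (Function.uncurry g)) :
    ipT a b c d f g = (Rect.mk a b c d).pair (toC f) (toC g) := by
  simp only [ipT, Rect.pair_apply, toC_apply hf, toC_apply hg]

lemma ipT_sub_left {a b c d : ℝ} {f g q : ℝ → ℝ → ℝ} (hf : Continuous (Function.uncurry f))
    (hg : Continuous (Function.uncurry g)) (hq : Continuous (Function.uncurry q)) :
    ipT a b c d (fun x y => f x y - g x y) q = ipT a b c d f q - ipT a b c d g q := by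
  rw [ipT_eq_pair (by exact hf.sub hg) hq, ipT_eq_pair hf hq, ipT_eq_pair hg hq, toC_sub hf hg,
    map_sub, LinearMap.sub_apply]

lemma ipT_const_mul_sub_left {a b c d r : ℝ} {f g q : ℝ → ℝ → ℝ}
    (hf : Continuous (Function.uncurry f)) (hg : Continuous (Function.uncurry g))
    (hq : Continuous (Function.uncurry q)) :
    ipT a b c d (fun x y => r * f x y - g x y) q = r * ipT a b c d f q - ipT a b c d g q := by
  have hrf : Continuous (Function.uncurry fun x y => r * f x y) := continuous_const.mul hf
  rw [ipT_sub_left hrf hg hq, ipT_eq_pair hrf hq, ipT_eq_pair hf hq,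
    show toC (fun x y => r * f x y) = r • toC f by ext p; simp [toC_apply hrf, toC_apply hf],
    map_smul, LinearMap.smul_apply, smul_eq_mul]

lemma IsProjT.pair_eq {k : ℕ} {a b c d : ℝ} {φ P q : ℝ → ℝ → ℝ} (h : IsProjT k a b c d φ P)
    (hφ : Continuous (Function.uncurry φ)) (hq : IsQk k q) :
    (Rect.mk a b c d).pair (toC P) (toC q) = (Rect.mk a b c d).pair (toC φ) (toC q) := by
  have h₀ := h.2 q hq
  rw [ipT_sub_left hφ h.1.continuous hq.continuous, ipT_eq_pair hφ hq.continuous,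
    ipT_eq_pair h.1.continuous hq.continuous, sub_eq_zero] at h₀
  exact h₀.symm

lemma IsProjE.integral_mul_eq {k : ℕ} {a b : ℝ} {f g q : ℝ → ℝ} (h : IsProjE k a b f g)
    (hf : Continuous f) (hq : IsPk k q) :
    ∫ x in a..b, g x * q x = ∫ x in a..b, f x * q x := by
  have h₀ := h.2 q hq
  have hq' := hq.continuous
  have hg := h.1.continuous
  simp only [sub_mul] at h₀
  rw [intervalIntegral.integral_sub (by apply Continuous.intervalIntegrable; fun_prop)
    (by apply Continuous.intervalIntegrable; fun_prop), sub_eq_zero] at h₀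
  exact h₀.symm

section WeakDerivatives

variable {k N : ℕ} {X : ℕ → ℝ} {w : WGFun} {i j : ℕ}

lemma IsWeakLap.pair_eq {D : ℕ → ℕ → ℝ → ℝ → ℝ} (hD : IsWeakLap k N X w D) (hi : i < N)
    (hj : j < N) (hw : w.ContOnElem i j) {φ : ℝ → ℝ → ℝ} (hφ : IsQk k φ) :
    (meshRect X i j).pair (toC (D i j)) (toC φ)
      = (meshRect X i j).pair (toC (w.v0 i j)) (toC (lapl φ))
        - (meshRect X i j).edgePair (edgeData w.vbH w.vbV i j) ((meshRect X i j).dn φ)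
        + (meshRect X i j).edgePair (normal (edgeData w.vgH1 w.vgV1 i j)
            (edgeData w.vgH2 w.vgV2 i j)) ((meshRect X i j).trace (toC φ)) := by
  have h := (hD i hi j hj).2 φ hφ
  rw [ipT_eq_pair (hD i hi j hj).1.continuous hφ.continuous,
    ipT_eq_pair hw.v0 hφ.lapl.continuous] at h
  rw [h, Rect.edgePair_apply, Rect.edgePair_apply]
  simp [Rect.dn, Rect.trace, normal, edgeData, toC_apply hφ.continuous,
    toC_apply hφ.pd1.continuous, toC_apply hφ.pd2.continuous, coe_toC₁ hw.bH₀, coe_toC₁ hw.bH₁,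
    coe_toC₁ hw.bV₀, coe_toC₁ hw.bV₁, coe_toC₁ hw.gH2₀, coe_toC₁ hw.gH2₁, coe_toC₁ hw.gV1₀,
    coe_toC₁ hw.gV1₁]

lemma IsWeakGrad.pair_eq {G₁ G₂ : ℕ → ℕ → ℝ → ℝ → ℝ} (hG : IsWeakGrad k N X w G₁ G₂)
    (hi : i < N) (hj : j < N) (hw : w.ContOnElem i j) {q₁ q₂ : ℝ → ℝ → ℝ} (hq₁ : IsQk k q₁)
    (hq₂ : IsQk k q₂) :
    (meshRect X i j).pair (toC (G₁ i j)) (toC q₁) + (meshRect X i j).pair (toC (G₂ i j)) (toC q₂)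
      = -(meshRect X i j).pair (toC (w.v0 i j)) (toC (pd1 q₁) + toC (pd2 q₂))
        + (meshRect X i j).edgePair (edgeData w.vbH w.vbV i j)
            (normal ((meshRect X i j).trace (toC q₁)) ((meshRect X i j).trace (toC q₂))) := by
  have h := (hG i hi j hj).2.2 q₁ q₂ hq₁ hq₂
  rw [ipT_eq_pair (hG i hi j hj).1.continuous hq₁.continuous,
    ipT_eq_pair (hG i hi j hj).2.1.continuous hq₂.continuous,
    ipT_eq_pair hw.v0 (hq₁.pd1.add hq₂.pd2).continuous,
    toC_add hq₁.pd1.continuous hq₂.pd2.continuous] at h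
  rw [h, Rect.edgePair_apply]
  simp [Rect.trace, normal, edgeData, toC_apply hq₁.continuous, toC_apply hq₂.continuous,
    coe_toC₁ hw.bH₀, coe_toC₁ hw.bH₁, coe_toC₁ hw.bV₀, coe_toC₁ hw.bV₁]

variable {u : ℝ → ℝ → ℝ}

lemma IsQNProj.edgePair_vb_eq_trace (hw : IsQNProj k N X u w) (hu : Continuous (Function.uncurry u))
    (hi : i < N) (hj : j < N) {q₁ q₂ : ℝ → ℝ → ℝ} (hq₁ : IsQk k q₁) (hq₂ : IsQk k q₂) :
    (meshRect X i j).edgePair (edgeData w.vbH w.vbV i j)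
        (normal ((meshRect X i j).trace (toC q₁)) ((meshRect X i j).trace (toC q₂)))
      = (meshRect X i j).edgePair ((meshRect X i j).trace (toC u))
        (normal ((meshRect X i j).trace (toC q₁)) ((meshRect X i j).trace (toC q₂))) := by
  have hc := hw.memVN.contOnElem hi hj
  rw [Rect.edgePair_apply, Rect.edgePair_apply]
  simp only [Rect.trace, normal, edgeData, Fin.isValue, Matrix.cons_val, Matrix.cons_val_zero,
    Matrix.cons_val_one, ContinuousMap.neg_apply, ContinuousMap.coe_mk, mul_neg,
    intervalIntegral.integral_neg, toC_apply hq₁.continuous, toC_apply hq₂.continuous,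
    coe_toC₁ hc.bH₀, coe_toC₁ hc.bH₁, coe_toC₁ hc.bV₀, coe_toC₁ hc.bV₁, toC_apply hu]
  rw [(hw.2.1 i hi j hj.le).1.integral_mul_eq (by fun_prop) (hq₂.isPk_fst _),
    (hw.2.1 i hi (j + 1) hj).1.integral_mul_eq (by fun_prop) (hq₂.isPk_fst _),
    (hw.2.2 i hi.le j hj).1.integral_mul_eq (by fun_prop) (hq₁.isPk_snd _),
    (hw.2.2 (i + 1) hi j hj).1.integral_mul_eq (by fun_prop) (hq₁.isPk_snd _)]

lemma IsQNProj.edgePair_vg_eq_dn (hw : IsQNProj k N X u w) (hu : ContDiff ℝ 1 (Function.uncurry u))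
    (hi : i < N) (hj : j < N) {φ : ℝ → ℝ → ℝ} (hφ : IsQk k φ) :
    (meshRect X i j).edgePair (normal (edgeData w.vgH1 w.vgV1 i j) (edgeData w.vgH2 w.vgV2 i j))
        ((meshRect X i j).trace (toC φ))
      = (meshRect X i j).edgePair ((meshRect X i j).dn u) ((meshRect X i j).trace (toC φ)) := by
  have hc := hw.memVN.contOnElem hi hj
  have hu₁ := continuous_pd1 hu
  have hu₂ := continuous_pd2 hu
  rw [Rect.edgePair_apply, Rect.edgePair_apply]
  simp only [Rect.dn, Rect.trace, normal, edgeData, Fin.isValue, Matrix.cons_val,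
    Matrix.cons_val_zero, Matrix.cons_val_one, ContinuousMap.neg_apply, ContinuousMap.coe_mk,
    neg_mul, intervalIntegral.integral_neg, toC_apply hφ.continuous, toC_apply hu₁, toC_apply hu₂,
    coe_toC₁ hc.gH2₀, coe_toC₁ hc.gH2₁, coe_toC₁ hc.gV1₀, coe_toC₁ hc.gV1₁]
  rw [(hw.2.1 i hi j hj.le).2.2.integral_mul_eq (by fun_prop) (hφ.isPk_fst _),
    (hw.2.1 i hi (j + 1) hj).2.2.integral_mul_eq (by fun_prop) (hφ.isPk_fst _),
    (hw.2.2 i hi.le j hj).2.1.integral_mul_eq (by fun_prop) (hφ.isPk_snd _),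
    (hw.2.2 (i + 1) hi j hj).2.1.integral_mul_eq (by fun_prop) (hφ.isPk_snd _)]

end WeakDerivatives

/-- `⟨w − P, (∇v₀ − 𝐯_g)·𝐧⟩_{∂T}` on `T = meshRect X i j`. -/
def l₁Elem (X : ℕ → ℝ) (w P : ℝ → ℝ → ℝ) (v : WGFun) (i j : ℕ) : ℝ :=
  (meshRect X i j).edgePair ((meshRect X i j).trace (toC w - toC P))
    (normal ((meshRect X i j).trace (toC (pd1 (v.v0 i j))) - edgeData v.vgH1 v.vgV1 i j)
      ((meshRect X i j).trace (toC (pd2 (v.v0 i j))) - edgeData v.vgH2 v.vgV2 i j))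

/-- `⟨∇(w − P)·𝐧, v₀ − v_b⟩_{∂T}` on `T = meshRect X i j`. -/
def l₂Elem (X : ℕ → ℝ) (w P : ℝ → ℝ → ℝ) (v : WGFun) (i j : ℕ) : ℝ :=
  (meshRect X i j).edgePair ((meshRect X i j).dn w - (meshRect X i j).dn P)
    ((meshRect X i j).trace (toC (v.v0 i j)) - edgeData v.vbH v.vbV i j)

/-- `⟨(∇u − (P₁, P₂))·𝐧, v₀ − v_b⟩_{∂T}` on `T = meshRect X i j`. -/
def l₃Elem (X : ℕ → ℝ) (u P₁ P₂ : ℝ → ℝ → ℝ) (v : WGFun) (i j : ℕ) : ℝ :=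
  (meshRect X i j).edgePair
    (normal ((meshRect X i j).trace (toC (pd1 u) - toC P₁))
      ((meshRect X i j).trace (toC (pd2 u) - toC P₂)))
    ((meshRect X i j).trace (toC (v.v0 i j)) - edgeData v.vbH v.vbV i j)

/-- `⟨w, 𝐯_g·𝐧⟩_{∂T}` on `T = meshRect X i j`. -/
def fluxVg (X : ℕ → ℝ) (w : ℝ → ℝ → ℝ) (v : WGFun) (i j : ℕ) : ℝ :=
  (meshRect X i j).edgePair ((meshRect X i j).trace (toC w))
    (normal (edgeData v.vgH1 v.vgV1 i j) (edgeData v.vgH2 v.vgV2 i j))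

/-- `⟨∇w·𝐧, v_b⟩_{∂T}` on `T = meshRect X i j`. -/
def fluxVb (X : ℕ → ℝ) (w : ℝ → ℝ → ℝ) (v : WGFun) (i j : ℕ) : ℝ :=
  (meshRect X i j).edgePair ((meshRect X i j).dn w) (edgeData v.vbH v.vbV i j)

section ElementIdentities

variable {k N : ℕ} {X : ℕ → ℝ} {u : ℝ → ℝ → ℝ} {i j : ℕ}

lemma IsQNProj.weakLap_eq_proj_lapl {Qu : WGFun} (hQu : IsQNProj k N X u Qu)
    (hu : ContDiff ℝ 2 (Function.uncurry u)) {D : ℕ → ℕ → ℝ → ℝ → ℝ} (hD : IsWeakLap k N X Qu D)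
    {P : ℝ → ℝ → ℝ} (hP : IsProjT k (X i) (X (i + 1)) (X j) (X (j + 1)) (lapl u) P)
    (hi : i < N) (hj : j < N) {φ : ℝ → ℝ → ℝ} (hφ : IsQk k φ) :
    (meshRect X i j).pair (toC (D i j)) (toC φ) = (meshRect X i j).pair (toC P) (toC φ) := by
  have hweak := hD.pair_eq hi hj (hQu.memVN.contOnElem hi hj) hφ
  have hQ₀ := (hQu.1 i hi j hj).pair_eq hu.continuous hφ.lapl
  have hQb := hQu.edgePair_vb_eq_trace hu.continuous hi hj hφ.pd1 hφ.pd2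
  have hQg := hQu.edgePair_vg_eq_dn (hu.of_le (by norm_num)) hi hj hφ
  have hgreen := (meshRect X i j).pair_lapl hu hφ.contDiff
  have hP' := hP.pair_eq (hu.lapl (n := 0)).continuous hφ
  simp only [Rect.dn] at hweak hQg hgreen
  linear_combination hweak + hQ₀ - hQb + hQg - hgreen - hP'

lemma IsQNProj.weakGrad_eq_proj_grad {Qu : WGFun} (hQu : IsQNProj k N X u Qu)
    (hu : ContDiff ℝ 1 (Function.uncurry u)) {G₁ G₂ : ℕ → ℕ → ℝ → ℝ → ℝ}
    (hG : IsWeakGrad k N X Qu G₁ G₂) {P₁ P₂ : ℝ → ℝ → ℝ}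
    (hP₁ : IsProjT k (X i) (X (i + 1)) (X j) (X (j + 1)) (pd1 u) P₁)
    (hP₂ : IsProjT k (X i) (X (i + 1)) (X j) (X (j + 1)) (pd2 u) P₂)
    (hi : i < N) (hj : j < N) {q₁ q₂ : ℝ → ℝ → ℝ} (hq₁ : IsQk k q₁) (hq₂ : IsQk k q₂) :
    (meshRect X i j).pair (toC (G₁ i j)) (toC q₁) + (meshRect X i j).pair (toC (G₂ i j)) (toC q₂)
      = (meshRect X i j).pair (toC P₁) (toC q₁) + (meshRect X i j).pair (toC P₂) (toC q₂) := by
  have hweak := hG.pair_eq hi hj (hQu.memVN.contOnElem hi hj) hq₁ hq₂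
  have hQ₀ := (hQu.1 i hi j hj).pair_eq hu.continuous (hq₁.pd1.add hq₂.pd2)
  have hQb := hQu.edgePair_vb_eq_trace hu.continuous hi hj hq₁ hq₂
  have hdiv := (meshRect X i j).pair_div hq₁.contDiff hq₂.contDiff hu
  have hP₁' := hP₁.pair_eq (continuous_pd1 hu) hq₁
  have hP₂' := hP₂.pair_eq (continuous_pd2 hu) hq₂
  rw [toC_add hq₁.pd1.continuous hq₂.pd2.continuous, Rect.pair_comm _ (toC u)] at hQ₀
  rw [Rect.edgePair_comm _ (Rect.trace _ (toC u))] at hQb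
  rw [Rect.pair_comm _ (toC q₁), Rect.pair_comm _ (toC q₂)] at hdiv
  linear_combination hweak - hQ₀ + hQb - hdiv - hP₁' - hP₂'

lemma IsWeakLap.pair_sub_pair_bilapl {v : WGFun} (hv : MemVN k N v) {Dv : ℕ → ℕ → ℝ → ℝ → ℝ}
    (hDv : IsWeakLap k N X v Dv) (hu : ContDiff ℝ 4 (Function.uncurry u)) {P : ℝ → ℝ → ℝ}
    (hP : IsProjT k (X i) (X (i + 1)) (X j) (X (j + 1)) (lapl u) P) (hi : i < N) (hj : j < N) :
    (meshRect X i j).pair (toC (Dv i j)) (toC P)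
        - (meshRect X i j).pair (toC (lapl (lapl u))) (toC (v.v0 i j))
      = l₁Elem X (lapl u) P v i j - l₂Elem X (lapl u) P v i j + fluxVg X (lapl u) v i j
        - fluxVb X (lapl u) v i j := by
  have hv₀ := hv.1 i hi j hj
  have hw : ContDiff ℝ 2 (Function.uncurry (lapl u)) := hu.lapl
  have hweak := hDv.pair_eq hi hj (hv.contOnElem hi hj) hP.1
  have hgreen_w := (meshRect X i j).pair_lapl hw hv₀.contDiff
  have hgreen_P := (meshRect X i j).pair_lapl hP.1.contDiff hv₀.contDiff
  have hP' := hP.pair_eq hw.continuous hv₀.lapl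
  have c₁ := (meshRect X i j).pair_comm (toC (v.v0 i j)) (toC (lapl P))
  have c₂ := (meshRect X i j).edgePair_comm (edgeData v.vbH v.vbV i j) ((meshRect X i j).dn P)
  have c₃ := (meshRect X i j).edgePair_comm
    (normal (edgeData v.vgH1 v.vgV1 i j) (edgeData v.vgH2 v.vgV2 i j))
    ((meshRect X i j).trace (toC P))
  simp only [l₁Elem, l₂Elem, fluxVg, fluxVb, Rect.dn, map_sub, LinearMap.sub_apply,
    Rect.trace_sub, normal_sub] at *
  linear_combination hweak - hgreen_w + hgreen_P + hP' + c₁ - c₂ + c₃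

lemma IsWeakGrad.pair_add_pair_lapl {v : WGFun} (hv : MemVN k N v) {G₁ G₂ : ℕ → ℕ → ℝ → ℝ → ℝ}
    (hG : IsWeakGrad k N X v G₁ G₂) (hu : ContDiff ℝ 2 (Function.uncurry u)) {P₁ P₂ : ℝ → ℝ → ℝ}
    (hP₁ : IsProjT k (X i) (X (i + 1)) (X j) (X (j + 1)) (pd1 u) P₁)
    (hP₂ : IsProjT k (X i) (X (i + 1)) (X j) (X (j + 1)) (pd2 u) P₂) (hi : i < N) (hj : j < N) :
    (meshRect X i j).pair (toC (G₁ i j)) (toC P₁) + (meshRect X i j).pair (toC (G₂ i j)) (toC P₂)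
        + (meshRect X i j).pair (toC (lapl u)) (toC (v.v0 i j))
      = l₃Elem X u P₁ P₂ v i j + fluxVb X u v i j := by
  have hv₀ := hv.1 i hi j hj
  have hweak := hG.pair_eq hi hj (hv.contOnElem hi hj) hP₁.1 hP₂.1
  have hdiv_P := (meshRect X i j).pair_div hP₁.1.contDiff hP₂.1.contDiff hv₀.contDiff
  have hdiv_u := (meshRect X i j).pair_div (ContDiff.pd1 (n := 1) hu)
    (ContDiff.pd2 (n := 1) hu) hv₀.contDiff
  rw [← Rect.toC_lapl hu] at hdiv_u
  have hP₁' := hP₁.pair_eq (continuous_pd1 (hu.of_le (by norm_num))) hv₀.pd1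
  have hP₂' := hP₂.pair_eq (continuous_pd2 (hu.of_le (by norm_num))) hv₀.pd2
  have c₁ := (meshRect X i j).pair_comm (toC (v.v0 i j)) (toC (pd1 P₁) + toC (pd2 P₂))
  have c₂ := (meshRect X i j).edgePair_comm (edgeData v.vbH v.vbV i j)
    (normal ((meshRect X i j).trace (toC P₁)) ((meshRect X i j).trace (toC P₂)))
  simp only [l₃Elem, fluxVb, Rect.dn, map_sub, LinearMap.sub_apply, Rect.trace_sub,
    normal_sub] at *
  linear_combination hweak - hdiv_P + hdiv_u + hP₁' + hP₂' - c₁ + c₂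

end ElementIdentities

section Stabilizer

variable {X : ℕ → ℝ} {u w v : WGFun} {i j : ℕ}

lemma sPair_eq (hu : u.ContOnElem i j) (hv : v.ContOnElem i j) :
    sPair X u v i j = (meshRect X i j).edgePair
      ((meshRect X i j).trace (toC (u.v0 i j)) - edgeData u.vbH u.vbV i j)
      ((meshRect X i j).trace (toC (v.v0 i j)) - edgeData v.vbH v.vbV i j) := by
  rw [Rect.edgePair_apply]
  simp [sPair, Rect.trace, edgeData, toC_apply hu.v0, toC_apply hv.v0, coe_toC₁ hu.bH₀,
    coe_toC₁ hu.bH₁, coe_toC₁ hu.bV₀, coe_toC₁ hu.bV₁, coe_toC₁ hv.bH₀, coe_toC₁ hv.bH₁,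
    coe_toC₁ hv.bV₀, coe_toC₁ hv.bV₁]

lemma sPairG_eq (hu : u.ContOnElem i j) (hu₀ : ContDiff ℝ 1 (Function.uncurry (u.v0 i j)))
    (hv : v.ContOnElem i j) (hv₀ : ContDiff ℝ 1 (Function.uncurry (v.v0 i j))) :
    sPairG X u v i j = (meshRect X i j).edgePair
        ((meshRect X i j).trace (toC (pd1 (u.v0 i j))) - edgeData u.vgH1 u.vgV1 i j)
        ((meshRect X i j).trace (toC (pd1 (v.v0 i j))) - edgeData v.vgH1 v.vgV1 i j)
      + (meshRect X i j).edgePair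
        ((meshRect X i j).trace (toC (pd2 (u.v0 i j))) - edgeData u.vgH2 u.vgV2 i j)
        ((meshRect X i j).trace (toC (pd2 (v.v0 i j))) - edgeData v.vgH2 v.vgV2 i j) := by
  have hu₁ := continuous_pd1 hu₀
  have hu₂ := continuous_pd2 hu₀
  have hv₁ := continuous_pd1 hv₀
  have hv₂ := continuous_pd2 hv₀
  rw [Rect.edgePair_eq_edgeIntegral, Rect.edgePair_eq_edgeIntegral, ← map_add,
    Rect.edgeIntegral_apply]
  simp [sPairG, Rect.trace, edgeData, toC_apply hu₁, toC_apply hu₂, toC_apply hv₁, toC_apply hv₂,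
    coe_toC₁ hu.gH1₀, coe_toC₁ hu.gH1₁, coe_toC₁ hu.gV1₀, coe_toC₁ hu.gV1₁,
    coe_toC₁ hu.gH2₀, coe_toC₁ hu.gH2₁, coe_toC₁ hu.gV2₀, coe_toC₁ hu.gV2₁,
    coe_toC₁ hv.gH1₀, coe_toC₁ hv.gH1₁, coe_toC₁ hv.gV1₀, coe_toC₁ hv.gV1₁,
    coe_toC₁ hv.gH2₀, coe_toC₁ hv.gH2₁, coe_toC₁ hv.gV2₀, coe_toC₁ hv.gV2₁]

lemma stab_sub {k N : ℕ} {ε h H : ℝ} (hu : MemVN k N u) (hw : MemVN k N w) (hv : MemVN k N v) :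
    stab N X ε h H (u.sub w) v = stab N X ε h H u v - stab N X ε h H w v := by
  simp only [stab, ← Finset.sum_sub_distrib]
  refine Finset.sum_congr rfl fun i hi => Finset.sum_congr rfl fun j hj => ?_
  rw [Finset.mem_range] at hi hj
  have cu := hu.contOnElem hi hj
  have cw := hw.contOnElem hi hj
  have cv := hv.contOnElem hi hj
  have du : ContDiff ℝ 1 (Function.uncurry (u.v0 i j)) := (hu.1 i hi j hj).contDiff
  have dw : ContDiff ℝ 1 (Function.uncurry (w.v0 i j)) := (hw.1 i hi j hj).contDiff
  have dv : ContDiff ℝ 1 (Function.uncurry (v.v0 i j)) := (hv.1 i hi j hj).contDiff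
  rw [sPair_eq (cu.sub cw) cv, sPair_eq cu cv, sPair_eq cw cv,
    sPairG_eq (cu.sub cw) (du.sub dw) cv dv, sPairG_eq cu du cv dv, sPairG_eq cw dw cv dv]
  simp only [WGFun.sub, pd1_sub (du.differentiable one_ne_zero) (dw.differentiable one_ne_zero),
    pd2_sub (du.differentiable one_ne_zero) (dw.differentiable one_ne_zero),
    toC_sub cu.v0 cw.v0, toC_sub (continuous_pd1 du) (continuous_pd1 dw),
    toC_sub (continuous_pd2 du) (continuous_pd2 dw),
    edgeData_sub cu.bH₀ cu.bH₁ cu.bV₀ cu.bV₁ cw.bH₀ cw.bH₁ cw.bV₀ cw.bV₁,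
    edgeData_sub cu.gH1₀ cu.gH1₁ cu.gV1₀ cu.gV1₁ cw.gH1₀ cw.gH1₁ cw.gV1₀ cw.gV1₁,
    edgeData_sub cu.gH2₀ cu.gH2₁ cu.gV2₀ cu.gV2₁ cw.gH2₀ cw.gH2₁ cw.gV2₀ cw.gV2₁,
    Rect.trace_sub, map_sub, LinearMap.sub_apply]
  ring

end Stabilizer

lemma aForm_sub {k N : ℕ} {X : ℕ → ℝ} {ε h H : ℝ} {u w v : WGFun}
    {Du Dw Dv Gu₁ Gu₂ Gw₁ Gw₂ Gv₁ Gv₂ : ℕ → ℕ → ℝ → ℝ → ℝ}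
    (hu : MemVN k N u) (hw : MemVN k N w) (hv : MemVN k N v) (hDu : IsWeakLap k N X u Du)
    (hDw : IsWeakLap k N X w Dw) (hDv : IsWeakLap k N X v Dv) (hGu : IsWeakGrad k N X u Gu₁ Gu₂)
    (hGw : IsWeakGrad k N X w Gw₁ Gw₂) (hGv : IsWeakGrad k N X v Gv₁ Gv₂) :
    aForm N X ε h H (u.sub w) v (fun i j x y => Du i j x y - Dw i j x y) Dv
        (fun i j x y => Gu₁ i j x y - Gw₁ i j x y) (fun i j x y => Gu₂ i j x y - Gw₂ i j x y)
        Gv₁ Gv₂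
      = aForm N X ε h H u v Du Dv Gu₁ Gu₂ Gv₁ Gv₂ - aForm N X ε h H w v Dw Dv Gw₁ Gw₂ Gv₁ Gv₂ := by
  rw [aForm, aForm, aForm, stab_sub hu hw hv, add_sub_add_comm]
  congr 1
  rw [← sum_sub_distrib]
  refine sum_congr rfl fun i hi => ?_
  rw [← sum_sub_distrib]
  refine sum_congr rfl fun j hj => ?_
  rw [mem_range] at hi hj
  rw [ipT_sub_left (hDu i hi j hj).1.continuous (hDw i hi j hj).1.continuous
      (hDv i hi j hj).1.continuous,
    ipT_sub_left (hGu i hi j hj).1.continuous (hGw i hi j hj).1.continuous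
      (hGv i hi j hj).1.continuous,
    ipT_sub_left (hGu i hi j hj).2.1.continuous (hGw i hi j hj).2.1.continuous
      (hGv i hi j hj).2.1.continuous]
  ring

section Telescoping

variable {k N : ℕ} {X : ℕ → ℝ} {w : ℝ → ℝ → ℝ} {v : WGFun}

lemma sum_edgePair_normal_edgeData_eq_zero {Φ₁ Φ₂ : ℝ → ℝ → ℝ}
    (hΦ₁ : Continuous (Function.uncurry Φ₁)) (hΦ₂ : Continuous (Function.uncurry Φ₂))
    {gH gV : ℕ → ℕ → ℝ → ℝ} (hgH : ∀ i < N, ∀ j ≤ N, Continuous (gH i j))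
    (hgV : ∀ i ≤ N, ∀ j < N, Continuous (gV i j)) (hH₀ : ∀ i < N, ∀ x, gH i 0 x = 0)
    (hHN : ∀ i < N, ∀ x, gH i N x = 0) (hV₀ : ∀ j < N, ∀ y, gV 0 j y = 0)
    (hVN : ∀ j < N, ∀ y, gV N j y = 0) :
    ∑ i ∈ range N, ∑ j ∈ range N, (meshRect X i j).edgePair
      (normal ((meshRect X i j).trace (toC Φ₁)) ((meshRect X i j).trace (toC Φ₂)))
      (edgeData gH gV i j) = 0 := by
  let A i j := ∫ x in X i..X (i + 1), Φ₂ x (X j) * gH i j x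
  let B i j := ∫ y in X j..X (j + 1), Φ₁ (X i) y * gV i j y
  have key : ∀ i ∈ range N, ∀ j ∈ range N, (meshRect X i j).edgePair
      (normal ((meshRect X i j).trace (toC Φ₁)) ((meshRect X i j).trace (toC Φ₂)))
      (edgeData gH gV i j) = (A i (j + 1) - A i j) + (B (i + 1) j - B i j) := by
    intro i hi j hj
    rw [mem_range] at hi hj
    rw [Rect.edgePair_apply]
    simp only [A, B, Rect.trace, normal, edgeData, Fin.isValue, Matrix.cons_val,
      Matrix.cons_val_zero, Matrix.cons_val_one, ContinuousMap.neg_apply, ContinuousMap.coe_mk,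
      neg_mul, intervalIntegral.integral_neg, toC_apply hΦ₁, toC_apply hΦ₂,
      coe_toC₁ (hgH i hi j hj.le), coe_toC₁ (hgH i hi (j + 1) hj), coe_toC₁ (hgV i hi.le j hj),
      coe_toC₁ (hgV (i + 1) hi j hj)]
    ring
  have hA : ∀ i ∈ range N, ∑ j ∈ range N, (A i (j + 1) - A i j) = 0 := fun i hi => by
    rw [sum_range_sub (A i)]
    simp [A, hH₀ i (mem_range.1 hi), hHN i (mem_range.1 hi)]
  have hB : ∀ j ∈ range N, ∑ i ∈ range N, (B (i + 1) j - B i j) = 0 := fun j hj => by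
    rw [sum_range_sub (fun i => B i j)]
    simp [B, hV₀ j (mem_range.1 hj), hVN j (mem_range.1 hj)]
  rw [sum_congr rfl fun i hi => sum_congr rfl (key i hi)]
  simp only [sum_add_distrib]
  rw [sum_comm (f := fun i j => B (i + 1) j - B i j), sum_eq_zero hA, sum_eq_zero hB, add_zero]

lemma sum_fluxVb_eq_zero (hw : ContDiff ℝ 1 (Function.uncurry w)) (hv : MemVN0 k N v) :
    ∑ i ∈ range N, ∑ j ∈ range N, fluxVb X w v i j = 0 :=
  sum_edgePair_normal_edgeData_eq_zero (continuous_pd1 hw) (continuous_pd2 hw)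
    (fun i hi j hj => (hv.1.2.1 i hi j hj).1.continuous)
    (fun i hi j hj => (hv.1.2.2 i hi j hj).1.continuous)
    (fun i hi => (hv.2.1 i hi).1) (fun i hi => (hv.2.1 i hi).2.1)
    (fun j hj => (hv.2.2 j hj).1) (fun j hj => (hv.2.2 j hj).2.1)

lemma sum_fluxVg_eq_zero (hw : Continuous (Function.uncurry w)) (hv : MemVN0 k N v) :
    ∑ i ∈ range N, ∑ j ∈ range N, fluxVg X w v i j = 0 := by
  simp only [fluxVg, Rect.edgePair_normal_edgeData]
  exact sum_edgePair_normal_edgeData_eq_zero hw hw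
    (fun i hi j hj => (hv.1.2.1 i hi j hj).2.2.continuous)
    (fun i hi j hj => (hv.1.2.2 i hi j hj).2.1.continuous)
    (fun i hi => (hv.2.1 i hi).2.2.1) (fun i hi => (hv.2.1 i hi).2.2.2)
    (fun j hj => (hv.2.2 j hj).2.2.1) (fun j hj => (hv.2.2 j hj).2.2.2)

end Telescoping

section LocalForms

variable {k N : ℕ} {X : ℕ → ℝ} {ε : ℝ} {u : ℝ → ℝ → ℝ} {v : WGFun}

lemma lForm1_eq (hu : Continuous (Function.uncurry (lapl u))) {P : ℕ → ℕ → ℝ → ℝ → ℝ}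
    (hP : ∀ i < N, ∀ j < N, IsQk k (P i j)) (hv : MemVN k N v) :
    lForm1 N X ε u P v = ∑ i ∈ range N, ∑ j ∈ range N, ε ^ 2 * l₁Elem X (lapl u) (P i j) v i j := by
  refine sum_congr rfl fun i hi => sum_congr rfl fun j hj => ?_
  rw [mem_range] at hi hj
  have hc := hv.contOnElem hi hj
  have hv₀ := hv.1 i hi j hj
  rw [l₁Elem, Rect.edgePair_apply]
  simp [Rect.trace, normal, edgeData, toC_apply hu, toC_apply (hP i hi j hj).continuous,
    toC_apply hv₀.pd1.continuous, toC_apply hv₀.pd2.continuous, coe_toC₁ hc.gH2₀,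
    coe_toC₁ hc.gH2₁, coe_toC₁ hc.gV1₀, coe_toC₁ hc.gV1₁]

lemma lForm2_eq (hu : ContDiff ℝ 1 (Function.uncurry (lapl u))) {P : ℕ → ℕ → ℝ → ℝ → ℝ}
    (hP : ∀ i < N, ∀ j < N, IsQk k (P i j)) (hv : MemVN k N v) :
    lForm2 N X ε u P v = ∑ i ∈ range N, ∑ j ∈ range N, ε ^ 2 * l₂Elem X (lapl u) (P i j) v i j := by
  refine sum_congr rfl fun i hi => sum_congr rfl fun j hj => ?_
  rw [mem_range] at hi hj
  have hc := hv.contOnElem hi hj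
  have hP' : ContDiff ℝ 1 (Function.uncurry (P i j)) := (hP i hi j hj).contDiff
  have hd : ContDiff ℝ 1 (Function.uncurry fun a b => lapl u a b - P i j a b) := hu.sub hP'
  have hd₁ := continuous_pd1 hd
  have hd₂ := continuous_pd2 hd
  rw [l₂Elem, ← Rect.dn_sub _ hu hP', Rect.edgePair_apply]
  simp [Rect.dn, Rect.trace, normal, edgeData, toC_apply hd₁, toC_apply hd₂, toC_apply hc.v0,
    coe_toC₁ hc.bH₀, coe_toC₁ hc.bH₁, coe_toC₁ hc.bV₀, coe_toC₁ hc.bV₁]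

lemma lForm3_eq (hu : ContDiff ℝ 1 (Function.uncurry u)) {P₁ P₂ : ℕ → ℕ → ℝ → ℝ → ℝ}
    (hP₁ : ∀ i < N, ∀ j < N, IsQk k (P₁ i j)) (hP₂ : ∀ i < N, ∀ j < N, IsQk k (P₂ i j))
    (hv : MemVN k N v) :
    lForm3 N X u P₁ P₂ v = ∑ i ∈ range N, ∑ j ∈ range N, l₃Elem X u (P₁ i j) (P₂ i j) v i j := by
  refine sum_congr rfl fun i hi => sum_congr rfl fun j hj => ?_
  rw [mem_range] at hi hj
  have hc := hv.contOnElem hi hj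
  rw [l₃Elem, Rect.edgePair_apply]
  simp [Rect.trace, normal, edgeData, toC_apply (continuous_pd1 hu), toC_apply (continuous_pd2 hu),
    toC_apply (hP₁ i hi j hj).continuous, toC_apply (hP₂ i hi j hj).continuous, toC_apply hc.v0,
    coe_toC₁ hc.bH₀, coe_toC₁ hc.bH₁, coe_toC₁ hc.bV₀, coe_toC₁ hc.bV₁]

end LocalForms

lemma aForm_proj_sub_source {k N : ℕ} {X : ℕ → ℝ} {ε h H : ℝ} {u : ℝ → ℝ → ℝ}
    (hu : ContDiff ℝ 4 (Function.uncurry u)) {Qu : WGFun} (hQu : IsQNProj k N X u Qu)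
    {DQ GQ₁ GQ₂ : ℕ → ℕ → ℝ → ℝ → ℝ} (hDQ : IsWeakLap k N X Qu DQ)
    (hGQ : IsWeakGrad k N X Qu GQ₁ GQ₂) {P P₁ P₂ : ℕ → ℕ → ℝ → ℝ → ℝ}
    (hP : ∀ i < N, ∀ j < N, IsProjT k (X i) (X (i + 1)) (X j) (X (j + 1)) (lapl u) (P i j))
    (hP₁₂ : ∀ i < N, ∀ j < N,
      IsProjT k (X i) (X (i + 1)) (X j) (X (j + 1)) (pd1 u) (P₁ i j) ∧
      IsProjT k (X i) (X (i + 1)) (X j) (X (j + 1)) (pd2 u) (P₂ i j))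
    {v : WGFun} (hv : MemVN0 k N v) {Dv Gv₁ Gv₂ : ℕ → ℕ → ℝ → ℝ → ℝ}
    (hDv : IsWeakLap k N X v Dv) (hGv : IsWeakGrad k N X v Gv₁ Gv₂) :
    aForm N X ε h H Qu v DQ Dv GQ₁ GQ₂ Gv₁ Gv₂
        - ∑ i ∈ range N, ∑ j ∈ range N, ipT (X i) (X (i + 1)) (X j) (X (j + 1))
            (fun x y => ε ^ 2 * lapl (lapl u) x y - lapl u x y) (v.v0 i j)
      = lForm1 N X ε u P v - lForm2 N X ε u P v + lForm3 N X u P₁ P₂ v + stab N X ε h H Qu v := by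
  have hu₂ : ContDiff ℝ 2 (Function.uncurry u) := hu.of_le (by norm_num)
  have hu₁ : ContDiff ℝ 1 (Function.uncurry u) := hu.of_le (by norm_num)
  have hw : ContDiff ℝ 2 (Function.uncurry (lapl u)) := hu.lapl
  have hww : Continuous (Function.uncurry (lapl (lapl u))) := (hw.lapl (n := 0)).continuous
  have elem : ∀ i ∈ range N, ∀ j ∈ range N,
      ε ^ 2 * ipT (X i) (X (i + 1)) (X j) (X (j + 1)) (DQ i j) (Dv i j)
          + ipT (X i) (X (i + 1)) (X j) (X (j + 1)) (GQ₁ i j) (Gv₁ i j)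
          + ipT (X i) (X (i + 1)) (X j) (X (j + 1)) (GQ₂ i j) (Gv₂ i j)
          - ipT (X i) (X (i + 1)) (X j) (X (j + 1))
            (fun x y => ε ^ 2 * lapl (lapl u) x y - lapl u x y) (v.v0 i j)
        = ε ^ 2 * l₁Elem X (lapl u) (P i j) v i j - ε ^ 2 * l₂Elem X (lapl u) (P i j) v i j
          + l₃Elem X u (P₁ i j) (P₂ i j) v i j
          + (ε ^ 2 * fluxVg X (lapl u) v i j - ε ^ 2 * fluxVb X (lapl u) v i j
            + fluxVb X u v i j) := by
    intro i hi j hj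
    rw [mem_range] at hi hj
    have hv₀ := hv.1.1 i hi j hj
    have e₁ := hQu.weakLap_eq_proj_lapl hu₂ hDQ (hP i hi j hj) hi hj (hDv i hi j hj).1
    have e₂ := hQu.weakGrad_eq_proj_grad hu₁ hGQ (hP₁₂ i hi j hj).1 (hP₁₂ i hi j hj).2 hi hj
      (hGv i hi j hj).1 (hGv i hi j hj).2.1
    have e₃ := hDv.pair_sub_pair_bilapl hv.1 hu (hP i hi j hj) hi hj
    have e₄ := hGv.pair_add_pair_lapl hv.1 hu₂ (hP₁₂ i hi j hj).1 (hP₁₂ i hi j hj).2 hi hj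
    rw [ipT_const_mul_sub_left hww hw.continuous hv₀.continuous, ipT_eq_pair hww hv₀.continuous,
      ipT_eq_pair hw.continuous hv₀.continuous, ipT_eq_pair (hDQ i hi j hj).1.continuous
        (hDv i hi j hj).1.continuous, ipT_eq_pair (hGQ i hi j hj).1.continuous
        (hGv i hi j hj).1.continuous, ipT_eq_pair (hGQ i hi j hj).2.1.continuous
        (hGv i hi j hj).2.1.continuous]
    rw [Rect.pair_comm _ (toC (P i j)), Rect.pair_comm _ (toC (P₁ i j)),
      Rect.pair_comm _ (toC (P₂ i j))] at *
    linear_combination ε ^ 2 * e₁ + e₂ + ε ^ 2 * e₃ + e₄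
  rw [aForm, add_sub_right_comm, ← sum_sub_distrib,
    sum_congr rfl fun i hi => (sum_sub_distrib ..).symm.trans (sum_congr rfl (elem i hi)),
    lForm1_eq hw.continuous (fun i hi j hj => (hP i hi j hj).1) hv.1,
    lForm2_eq (hw.of_le (by norm_num)) (fun i hi j hj => (hP i hi j hj).1) hv.1,
    lForm3_eq hu₁ (fun i hi j hj => (hP₁₂ i hi j hj).1.1) (fun i hi j hj => (hP₁₂ i hi j hj).2.1)
      hv.1]
  simp only [sum_add_distrib, sum_sub_distrib, ← mul_sum]
  rw [sum_fluxVg_eq_zero hw.continuous hv, sum_fluxVb_eq_zero (hw.of_le (by norm_num)) hv,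
    sum_fluxVb_eq_zero hu₁ hv]
  ring

theorem statement14_general (k : ℕ) (N : ℕ) (ε : ℝ) (X : ℕ → ℝ) (h H : ℝ)
    -- the exact solution u
    (u : ℝ → ℝ → ℝ) (hu : ContDiff ℝ 4 (fun p : ℝ × ℝ => u p.1 p.2))
    -- the WG solution u_N with its discrete weak Laplacian and gradient
    (uN : WGFun) (huN : MemVN0 k N uN)
    (DuN GuN1 GuN2 : ℕ → ℕ → ℝ → ℝ → ℝ)
    (hDuN : IsWeakLap k N X uN DuN)
    (hGuN : IsWeakGrad k N X uN GuN1 GuN2)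
    -- the WG scheme: a(u_N, w) = (f, w₀) for all w ∈ V_N⁰, with f = ε²Δ²u − Δu
    (hscheme : ∀ w : WGFun, MemVN0 k N w →
      ∀ Dw Gw1 Gw2 : ℕ → ℕ → ℝ → ℝ → ℝ,
        IsWeakLap k N X w Dw → IsWeakGrad k N X w Gw1 Gw2 →
        aForm N X ε h H uN w DuN Dw GuN1 GuN2 Gw1 Gw2 =
          ∑ i ∈ Finset.range N, ∑ j ∈ Finset.range N,
            ipT (X i) (X (i+1)) (X j) (X (j+1))
              (fun x y => ε ^ 2 * lapl (lapl u) x y - lapl u x y) (w.v0 i j))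
    -- the projection Q_N u with its discrete weak Laplacian and gradient
    (Qu : WGFun) (hQu : IsQNProj k N X u Qu)
    (DQ GQ1 GQ2 : ℕ → ℕ → ℝ → ℝ → ℝ)
    (hDQ : IsWeakLap k N X Qu DQ)
    (hGQ : IsWeakGrad k N X Qu GQ1 GQ2)
    -- the elementwise projections Q₀(Δu) and 𝐐_N(∇u)
    (P P1 P2 : ℕ → ℕ → ℝ → ℝ → ℝ)
    (hP : ∀ i < N, ∀ j < N,
      IsProjT k (X i) (X (i+1)) (X j) (X (j+1)) (lapl u) (P i j))
    (hP12 : ∀ i < N, ∀ j < N,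
      IsProjT k (X i) (X (i+1)) (X j) (X (j+1)) (pd1 u) (P1 i j) ∧
      IsProjT k (X i) (X (i+1)) (X j) (X (j+1)) (pd2 u) (P2 i j)) :
    -- conclusion: the error equation holds for every v ∈ V_N⁰
    ∀ v : WGFun, MemVN0 k N v →
      ∀ Dv Gv1 Gv2 : ℕ → ℕ → ℝ → ℝ → ℝ,
        IsWeakLap k N X v Dv → IsWeakGrad k N X v Gv1 Gv2 →
        aForm N X ε h H (Qu.sub uN) v
            (fun i j x y => DQ i j x y - DuN i j x y) Dv
            (fun i j x y => GQ1 i j x y - GuN1 i j x y)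
            (fun i j x y => GQ2 i j x y - GuN2 i j x y) Gv1 Gv2 =
          lForm1 N X ε u P v - lForm2 N X ε u P v + lForm3 N X u P1 P2 v
            + stab N X ε h H Qu v := by
  intro v hv Dv Gv1 Gv2 hDv hGv
  rw [aForm_sub hQu.memVN huN.1 hv.1 hDQ hDuN hDv hGQ hGuN hGv, hscheme v hv Dv Gv1 Gv2 hDv hGv]
  exact aForm_proj_sub_source hu hQu hDQ hGQ hP hP12 hv hDv hGv

/-- the error equation (5.1):
`a(e_N, v) = l₁(u,v) − l₂(u,v) + l₃(u,v) + s(Q_N u, v)` for all `v ∈ V_N⁰`,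
where `e_N = Q_N u − u_N` and `u_N ∈ V_N⁰` is the WG solution of the scheme. -/
theorem statement14 (k : ℕ) (hk : 3 ≤ k) (N : ℕ) (hN : 4 ≤ N) (hN4 : 4 ∣ N)
    (ε : ℝ) (hε0 : 0 < ε) (hε1 : ε < 1) (hlam : shLam k N ε ≤ 1 / 4)
    (X : ℕ → ℝ) (hX : X = shPt k N ε)
    (h H : ℝ) (hh : h = shH k N ε) (hH : H = shHc k N ε)
    -- the exact solution u
    (u : ℝ → ℝ → ℝ) (hu : ContDiff ℝ 4 (fun p : ℝ × ℝ => u p.1 p.2))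
    (hub : ∀ t ∈ Set.Icc (0:ℝ) 1, u t 0 = 0 ∧ u t 1 = 0 ∧ u 0 t = 0 ∧ u 1 t = 0)
    (hun : ∀ t ∈ Set.Icc (0:ℝ) 1,
      pd2 u t 0 = 0 ∧ pd2 u t 1 = 0 ∧ pd1 u 0 t = 0 ∧ pd1 u 1 t = 0)
    -- the WG solution u_N with its discrete weak Laplacian and gradient
    (uN : WGFun) (huN : MemVN0 k N uN)
    (DuN GuN1 GuN2 : ℕ → ℕ → ℝ → ℝ → ℝ)
    (hDuN : IsWeakLap k N X uN DuN)
    (hGuN : IsWeakGrad k N X uN GuN1 GuN2)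
    -- the WG scheme: a(u_N, w) = (f, w₀) for all w ∈ V_N⁰, with f = ε²Δ²u − Δu
    (hscheme : ∀ w : WGFun, MemVN0 k N w →
      ∀ Dw Gw1 Gw2 : ℕ → ℕ → ℝ → ℝ → ℝ,
        IsWeakLap k N X w Dw → IsWeakGrad k N X w Gw1 Gw2 →
        aForm N X ε h H uN w DuN Dw GuN1 GuN2 Gw1 Gw2 =
          ∑ i ∈ Finset.range N, ∑ j ∈ Finset.range N,
            ipT (X i) (X (i+1)) (X j) (X (j+1))
              (fun x y => ε ^ 2 * lapl (lapl u) x y - lapl u x y) (w.v0 i j))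
    -- the projection Q_N u with its discrete weak Laplacian and gradient
    (Qu : WGFun) (hQu : IsQNProj k N X u Qu)
    (DQ GQ1 GQ2 : ℕ → ℕ → ℝ → ℝ → ℝ)
    (hDQ : IsWeakLap k N X Qu DQ)
    (hGQ : IsWeakGrad k N X Qu GQ1 GQ2)
    -- the elementwise projections Q₀(Δu) and 𝐐_N(∇u)
    (P P1 P2 : ℕ → ℕ → ℝ → ℝ → ℝ)
    (hP : ∀ i < N, ∀ j < N,
      IsProjT k (X i) (X (i+1)) (X j) (X (j+1)) (lapl u) (P i j))
    (hP12 : ∀ i < N, ∀ j < N,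
      IsProjT k (X i) (X (i+1)) (X j) (X (j+1)) (pd1 u) (P1 i j) ∧
      IsProjT k (X i) (X (i+1)) (X j) (X (j+1)) (pd2 u) (P2 i j)) :
    -- conclusion: the error equation holds for every v ∈ V_N⁰
    ∀ v : WGFun, MemVN0 k N v →
      ∀ Dv Gv1 Gv2 : ℕ → ℕ → ℝ → ℝ → ℝ,
        IsWeakLap k N X v Dv → IsWeakGrad k N X v Gv1 Gv2 →
        aForm N X ε h H (Qu.sub uN) v
            (fun i j x y => DQ i j x y - DuN i j x y) Dv
            (fun i j x y => GQ1 i j x y - GuN1 i j x y)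
            (fun i j x y => GQ2 i j x y - GuN2 i j x y) Gv1 Gv2 =
          lForm1 N X ε u P v - lForm2 N X ε u P v + lForm3 N X u P1 P2 v
            + stab N X ε h H Qu v :=
  statement14_general k N ε X h H u hu uN huN DuN GuN1 GuN2 hDuN hGuN hscheme Qu hQu DQ GQ1 GQ2 hDQ
    hGQ P P1 P2 hP hP12
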